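/- arXiv:2208.13028 — 5 statements merged into one kernel-verified Lean document; each statement's English description precedes it below -/
import Mathlib

section
/- Let n, m, d ∈ ℕ satisfy d ≥ 4. Let G be a (2m, d)-expander graph on n vertices which is also m-joined. Let T be a tree with maximum degree at most d/2 such that |V(T)| ≤ n − (2d+3)m. Then for every vertex t ∈ V(T) and every v ∈ V(G), there exists an embedding (injective graph homomorphism) of T into G mapping t to v. -/
open scoped Classical

/-- The external neighbourhood of `S` in `G`: vertices outside `S` with a neighbour in `S`. -/
noncomputable def extNbhd {V : Type*} [Fintype V] (G : SimpleGraph V) (S : Finset V) :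
    Finset V :=
  Finset.univ.filter fun v => v ∉ S ∧ ∃ u ∈ S, G.Adj u v

/-- `G` is an `(m,d)`-expander: every nonempty `S` with `|S| ≤ m` satisfies `|N(S)| ≥ d|S|`. -/
def IsExpander {V : Type*} [Fintype V] (G : SimpleGraph V) (m d : ℝ) : Prop :=
  ∀ S : Finset V, S.Nonempty → (S.card : ℝ) ≤ m → d * S.card ≤ (extNbhd G S).card

/-- `G` is `(m,m')`-joined: every pair of disjoint sets of sizes `m` and `m'` has an edge
between them. -/
def IsJoined {V : Type*} (G : SimpleGraph V) (m m' : ℕ) : Prop :=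
  ∀ A B : Finset V, Disjoint A B → A.card = m → B.card = m' →
    ∃ a ∈ A, ∃ b ∈ B, G.Adj a b

/-!
Embed `T` vertex by vertex, starting from `t ↦ v` and keeping the embedded set `A` connected.
Put `h = ⌊d/2⌋` and give every vertex `y` of `G` a capacity: the number of unembedded neighbours
of `f⁻¹(y)` if `y` is used, and `h` if `y` is free. The invariant is that every `X ⊆ V(G)` with
`|X| ≤ 2m` satisfies `∑_{y ∈ X} cap(y) ≤ |N(X) \ f(A)|`. Call `X` tight if equality holds. By
`m`-joinedness tight sets have fewer than `m` vertices, and by submodularity of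
`X ↦ |N(X) \ f(A)|` they are closed under union. To embed a new neighbour `w` of an embedded `u`,
take the largest tight set `C` avoiding `f(u)`. The invariant at `C ∪ {f(u)}` yields a free
neighbour `y` of `f(u)` outside `C ∪ N(C)`, and mapping `w ↦ y` keeps the invariant.
-/

open Finset

section ExternalNeighbourhood

variable {V : Type*} [Fintype V] {G : SimpleGraph V} {X Y S : Finset V} {z : V}

lemma mem_extNbhd : z ∈ extNbhd G X ↔ z ∉ X ∧ ∃ u ∈ X, G.Adj u z := by
  simp [extNbhd]

@[simp] lemma extNbhd_empty : extNbhd G ∅ = ∅ := by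
  ext z; simp [mem_extNbhd]

lemma extNbhd_subset_union_extNbhd (h : X ⊆ Y) : extNbhd G X ⊆ Y ∪ extNbhd G Y := by
  intro z hz
  simp only [mem_union, mem_extNbhd] at hz ⊢
  grind

lemma card_extNbhd_union_sdiff_add_card_extNbhd_inter_sdiff_le :
    #(extNbhd G (X ∪ Y) \ S) + #(extNbhd G (X ∩ Y) \ S) ≤
      #(extNbhd G X \ S) + #(extNbhd G Y \ S) := by
  rw [← card_union_add_card_inter, ← card_union_add_card_inter (extNbhd G X \ S)]
  refine add_le_add (card_le_card ?_) (card_le_card ?_) <;>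
  · intro z hz
    simp only [mem_union, mem_inter, mem_sdiff, mem_extNbhd] at hz ⊢
    grind

lemma IsJoined.card_lt_card_add_card_extNbhd {m : ℕ} (hG : IsJoined G m m) (hX : m ≤ #X) :
    Fintype.card V < #X + #(extNbhd G X) + m := by
  set R := univ \ (X ∪ extNbhd G X)
  have hR : #R < m := by
    by_contra! hc
    obtain ⟨B, hB, rfl⟩ := exists_subset_card_eq hc
    obtain ⟨A, hA, hAcard⟩ := exists_subset_card_eq hX
    have hXR : Disjoint X R := disjoint_sdiff.mono_left subset_union_left
    obtain ⟨a, ha, b, hb, hab⟩ := hG A B (hXR.mono hA hB) hAcard rfl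
    have hbX : b ∉ X := disjoint_right.mp hXR (hB hb)
    exact (mem_sdiff.mp (hB hb)).2 (mem_union_right _ (mem_extNbhd.mpr ⟨hbX, a, hA ha, hab⟩))
  calc Fintype.card V = #(X ∪ extNbhd G X) + #R := by
        rw [add_comm, card_sdiff_add_card_eq_card (subset_univ _), card_univ]
    _ < #X + #(extNbhd G X) + m := by
        have := card_union_le X (extNbhd G X); omega

lemma IsExpander.le_card_extNbhd {M : ℝ} {d : ℕ} (hG : IsExpander G M d) {X : Finset V}
    (hX : X.Nonempty) (hXM : (#X : ℝ) ≤ M) : d * #X ≤ #(extNbhd G X) := by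
  exact_mod_cast hG X hX hXM

end ExternalNeighbourhood

lemma Finset.exists_greatest_of_union_closed {α : Type*} [Fintype α] {p : Finset α → Prop}
    (hempty : p ∅) (hunion : ∀ X Y, p X → p Y → p (X ∪ Y)) :
    ∃ C, p C ∧ ∀ X, p X → X ⊆ C := by
  refine ⟨(univ.filter p).sup id, ?_,
    fun X hX => le_sup (f := id) (mem_filter.mpr ⟨mem_univ X, hX⟩)⟩
  exact sup_induction hempty (fun X hX Y hY => hunion X Y hX hY) fun X hX => (mem_filter.mp hX).2

section Update

variable {V W : Type*} {A : Finset W} {f : W → V} {w : W} {y : V}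

lemma image_update_insert (hw : w ∉ A) :
    (insert w A).image (Function.update f w y) = insert y (A.image f) := by
  rw [image_insert, Function.update_self,
    image_congr fun a ha => Function.update_of_ne (ne_of_mem_of_not_mem ha hw) y f]

lemma Set.InjOn.update_insert (hinj : Set.InjOn f A) (hw : w ∉ A) (hy : y ∉ A.image f) :
    Set.InjOn (Function.update f w y) ↑(insert w A) := by
  have heq : Set.EqOn (Function.update f w y) f A := fun a ha =>
    Function.update_of_ne (ne_of_mem_of_not_mem ha hw) y f
  rw [coe_insert, Set.injOn_insert (mem_coe.not.mpr hw), heq.image_eq, Function.update_self]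
  exact ⟨hinj.congr heq.symm, by simpa using hy⟩

end Update

section Capacity

variable {V W : Type*} [Fintype W]

/-- Summing over the fibre keeps the definition total; for `f` injective on `A` the fibre of a
used vertex is a single vertex (`capacity_apply_of_mem`). -/
noncomputable def capacity (T : SimpleGraph W) (h : ℕ) (A : Finset W) (f : W → V) (y : V) :
    ℕ :=
  if y ∈ A.image f then ∑ u ∈ A with f u = y, #(T.neighborFinset u \ A) else h

variable {T : SimpleGraph W} {h : ℕ} {A : Finset W} {f : W → V} {w : W} {y : V}

lemma capacity_apply_of_mem (hinj : Set.InjOn f A) {u : W} (hu : u ∈ A) :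
    capacity T h A f (f u) = #(T.neighborFinset u \ A) := by
  have hfiber : {a ∈ A | f a = f u} = {u} := by
    ext a
    simp only [mem_filter, mem_singleton]
    exact ⟨fun ⟨ha, hfa⟩ => hinj ha hu hfa, by rintro rfl; exact ⟨hu, rfl⟩⟩
  rw [capacity, if_pos (mem_image_of_mem f hu), hfiber, sum_singleton]

lemma capacity_of_notMem_image (hy : y ∉ A.image f) : capacity T h A f y = h :=
  if_neg hy

lemma capacity_le (hinj : Set.InjOn f A) (hdeg : ∀ w, T.degree w ≤ h) (y : V) :
    capacity T h A f y ≤ h := by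
  by_cases hy : y ∈ A.image f
  · obtain ⟨u, hu, rfl⟩ := mem_image.mp hy
    rw [capacity_apply_of_mem hinj hu]
    exact (card_le_card sdiff_subset).trans (hdeg u)
  · exact (capacity_of_notMem_image hy).le

lemma sum_capacity_le (hinj : Set.InjOn f A) (hdeg : ∀ w, T.degree w ≤ h) (X : Finset V) :
    ∑ y ∈ X, capacity T h A f y ≤ #X * h :=
  sum_le_card_nsmul X _ h fun y _ => capacity_le hinj hdeg y

lemma capacity_update_insert_le (hinj : Set.InjOn f A) (hdeg : ∀ w, T.degree w ≤ h)
    (hw : w ∉ A) (hy : y ∉ A.image f) (z : V) :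
    capacity T h (insert w A) (Function.update f w y) z ≤ capacity T h A f z := by
  have hinj' := hinj.update_insert hw hy
  by_cases hz : z ∈ (insert w A).image (Function.update f w y)
  · obtain ⟨a, ha, rfl⟩ := mem_image.mp hz
    rw [capacity_apply_of_mem hinj' ha]
    rcases mem_insert.mp ha with rfl | ha
    · rw [Function.update_self, capacity_of_notMem_image hy]
      exact (card_le_card sdiff_subset).trans (hdeg a)
    · rw [Function.update_of_ne (ne_of_mem_of_not_mem ha hw), capacity_apply_of_mem hinj ha]
      exact card_le_card (sdiff_subset_sdiff le_rfl (subset_insert w A))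
  · rw [image_update_insert hw, mem_insert, not_or] at hz
    rw [capacity_of_notMem_image (image_update_insert hw ▸ mem_insert.not.mpr (not_or.mpr hz)),
      capacity_of_notMem_image hz.2]

lemma capacity_update_insert_lt (hinj : Set.InjOn f A) {u : W} (hu : u ∈ A) (huw : T.Adj u w)
    (hw : w ∉ A) (hy : y ∉ A.image f) :
    capacity T h (insert w A) (Function.update f w y) (f u) < capacity T h A f (f u) := by
  have hfu : Function.update f w y u = f u :=
    Function.update_of_ne (ne_of_mem_of_not_mem hu hw) y f
  rw [← hfu, capacity_apply_of_mem (hinj.update_insert hw hy) (mem_insert_of_mem hu), hfu,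
    capacity_apply_of_mem hinj hu, sdiff_insert]
  exact card_erase_lt_of_mem (mem_sdiff.mpr ⟨(T.mem_neighborFinset u w).mpr huw, hw⟩)

end Capacity

section GoodSets

variable {V W : Type*} [Fintype V] [Fintype W]

def IsGood (G : SimpleGraph V) (T : SimpleGraph W) (m h : ℕ) (A : Finset W) (f : W → V) :
    Prop :=
  ∀ X : Finset V, #X ≤ 2 * m → ∑ y ∈ X, capacity T h A f y ≤ #(extNbhd G X \ A.image f)

def IsTight (G : SimpleGraph V) (T : SimpleGraph W) (m h : ℕ) (A : Finset W) (f : W → V)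
    (X : Finset V) : Prop :=
  #X ≤ 2 * m ∧ #(extNbhd G X \ A.image f) ≤ ∑ y ∈ X, capacity T h A f y

variable {G : SimpleGraph V} {T : SimpleGraph W} {m h : ℕ} {A : Finset W} {f : W → V}

lemma isTight_empty : IsTight G T m h A f ∅ := by
  simp [IsTight]

/-- Joinedness makes tight sets small: a tight set of size at least `m` would, together with its
neighbourhood, cover almost all of `G`, leaving no room for `A`. -/
lemma IsTight.card_lt (hG : IsJoined G m m) (hinj : Set.InjOn f A) (hdeg : ∀ w, T.degree w ≤ h)
    (hsize : #A + (2 * h + 3) * m ≤ Fintype.card V) {X : Finset V} (hX : IsTight G T m h A f X) :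
    #X < m := by
  by_contra! hmX
  have hcover := hG.card_lt_card_add_card_extNbhd hmX
  have hext : #(extNbhd G X) ≤ #(extNbhd G X \ A.image f) + #A :=
    card_le_card_sdiff_add_card.trans (Nat.add_le_add_left card_image_le _)
  have hcap := sum_capacity_le hinj hdeg X
  have hXh : #X * h ≤ 2 * m * h := Nat.mul_le_mul_right h hX.1
  nlinarith [hX.2, hX.1]

lemma IsGood.isTight_union (hgood : IsGood G T m h A f) {X Y : Finset V}
    (hX : IsTight G T m h A f X) (hY : IsTight G T m h A f Y) (hXY : #(X ∪ Y) ≤ 2 * m) :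
    IsTight G T m h A f (X ∪ Y) := by
  refine ⟨hXY, ?_⟩
  have hsub := card_extNbhd_union_sdiff_add_card_extNbhd_inter_sdiff_le (G := G) (X := X) (Y := Y)
    (S := A.image f)
  have hinter := hgood (X ∩ Y) ((card_le_card inter_subset_union).trans hXY)
  have hsum := sum_union_inter (s₁ := X) (s₂ := Y) (f := capacity T h A f)
  linarith [hX.2, hY.2]

/-- The greatest tight set `C` avoiding `x` exists because tight sets are small and closed under
union; by goodness at `insert x C`, some neighbour of `x` lies outside `f(A) ∪ C ∪ N(C)`. -/
lemma IsGood.exists_adj_forall_isTight_notMem_extNbhd (hgood : IsGood G T m h A f)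
    (hG : IsJoined G m m) (hinj : Set.InjOn f A) (hdeg : ∀ w, T.degree w ≤ h)
    (hsize : #A + (2 * h + 3) * m ≤ Fintype.card V) {x : V} (hx : 0 < capacity T h A f x) :
    ∃ y, G.Adj x y ∧ y ∉ A.image f ∧
      ∀ X, IsTight G T m h A f X → x ∉ X → y ∉ extNbhd G X := by
  have hsmall : ∀ {X}, IsTight G T m h A f X → #X < m := fun hX => hX.card_lt hG hinj hdeg hsize
  obtain ⟨C, ⟨hC, hxC⟩, hCmax⟩ := Finset.exists_greatest_of_union_closed
    (p := fun X => IsTight G T m h A f X ∧ x ∉ X) ⟨isTight_empty, notMem_empty x⟩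
    fun X Y ⟨hX, hxX⟩ ⟨hY, hxY⟩ =>
      ⟨hgood.isTight_union hX hY (by have := card_union_le X Y; grind [hsmall hX, hsmall hY]),
        by simp [hxX, hxY]⟩
  suffices ∃ y, G.Adj x y ∧ y ∉ A.image f ∧ y ∉ C ∪ extNbhd G C by
    obtain ⟨y, hxy, hyA, hyC⟩ := this
    exact ⟨y, hxy, hyA, fun X hX hxX hyX =>
      hyC (extNbhd_subset_union_extNbhd (hCmax X ⟨hX, hxX⟩) hyX)⟩
  by_contra! hnone
  have hsub : extNbhd G (insert x C) \ A.image f ⊆ extNbhd G C \ A.image f := by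
    intro z hz
    simp only [mem_sdiff, mem_extNbhd, mem_insert, mem_union] at hz hnone ⊢
    grind
  have hgoodxC := hgood (insert x C) (by have := card_insert_le x C; grind [hsmall hC])
  rw [sum_insert hxC] at hgoodxC
  have := card_le_card hsub
  have := hC.2
  omega

/-- Every `X` either contains `x`, where capacity was freed, or has slack because it is not tight,
or does not see the newly used vertex `y`. -/
lemma IsGood.of_capacity_le {A' : Finset W} {f' : W → V} {x y : V} (hgood : IsGood G T m h A f)
    (himage : A'.image f' = insert y (A.image f))
    (hle : ∀ z, capacity T h A' f' z ≤ capacity T h A f z)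
    (hlt : capacity T h A' f' x < capacity T h A f x)
    (hy : ∀ X, IsTight G T m h A f X → x ∉ X → y ∉ extNbhd G X) :
    IsGood G T m h A' f' := by
  intro X hX
  have hsum : ∑ z ∈ X, capacity T h A' f' z ≤ ∑ z ∈ X, capacity T h A f z :=
    sum_le_sum fun z _ => hle z
  have herase := pred_card_le_card_erase (s := extNbhd G X \ A.image f) (a := y)
  have hgoodX := hgood X hX
  rw [himage, sdiff_insert]
  by_cases hxX : x ∈ X
  · have : ∑ z ∈ X, capacity T h A' f' z < ∑ z ∈ X, capacity T h A f z :=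
      sum_lt_sum (fun z _ => hle z) ⟨x, hxX, hlt⟩
    omega
  by_cases hyX : y ∈ extNbhd G X
  · have hslack : ∑ z ∈ X, capacity T h A f z < #(extNbhd G X \ A.image f) :=
      lt_of_not_ge fun h => hy X ⟨hX, h⟩ hxX hyX
    omega
  · rw [erase_eq_of_notMem fun h => hyX (mem_sdiff.mp h).1]
    omega

/-- A single embedded vertex `v` costs at most one vertex of each neighbourhood, and the
expansion `d ≥ 2h` leaves room for the reserve `h` of every vertex. -/
lemma isGood_singleton {d : ℕ} (hG : IsExpander G (2 * (m : ℝ)) d) (hhd : 2 * h ≤ d)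
    (hdeg : ∀ w, T.degree w ≤ h) (t : W) (v : V) :
    IsGood G T m h {t} (fun _ => v) := by
  intro X hX
  rcases X.eq_empty_or_nonempty with rfl | hne
  · simp
  rw [image_singleton]
  have hcap := sum_capacity_le (A := {t}) (f := fun _ => v) (by simp) hdeg X
  have hexp := hG.le_card_extNbhd hne (by exact_mod_cast hX)
  have hv : #(extNbhd G X) ≤ #(extNbhd G X \ {v}) + 1 := card_le_card_sdiff_add_card
  have hdh : 2 * (#X * h) ≤ d * #X := by nlinarith
  omega

end GoodSets

lemma SimpleGraph.IsAcyclic.eq_of_adj_of_adj {W : Type*} {T : SimpleGraph W} (hT : T.IsAcyclic)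
    {u₁ u₂ w : W} (p : T.Walk u₁ u₂) (hw : w ∉ p.support) (h₁ : T.Adj w u₁)
    (h₂ : T.Adj w u₂) : u₁ = u₂ := by
  classical
  have hpath : (SimpleGraph.Walk.cons h₁ p.bypass).IsPath :=
    p.bypass_isPath.cons fun h => hw (p.support_bypass_subset_support h)
  have := hT.eq_snd_of_adj_start hpath h₂ (by simp)
  simpa using this.symm

section PartialEmbedding

variable {V W : Type*} [Fintype V] [Fintype W]

structure IsGoodPartialEmbedding (G : SimpleGraph V) (T : SimpleGraph W) (m h : ℕ) (t : W)
    (A : Finset W) (f : W → V) : Prop where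
  root_mem : t ∈ A
  injOn : Set.InjOn f A
  map_adj : ∀ ⦃a b⦄, a ∈ A → b ∈ A → T.Adj a b → G.Adj (f a) (f b)
  exists_walk : ∀ a ∈ A, ∃ p : T.Walk t a, ∀ x ∈ p.support, x ∈ A
  isGood : IsGood G T m h A f

variable {G : SimpleGraph V} {T : SimpleGraph W} {m h : ℕ} {t : W}

lemma IsGoodPartialEmbedding.eq_of_adj {A : Finset W} {f : W → V}
    (P : IsGoodPartialEmbedding G T m h t A f)
    (hT : T.IsAcyclic) {a b w : W} (ha : a ∈ A) (hb : b ∈ A) (hw : w ∉ A)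
    (hwa : T.Adj w a) (hwb : T.Adj w b) : a = b := by
  obtain ⟨p, hp⟩ := P.exists_walk a ha
  obtain ⟨q, hq⟩ := P.exists_walk b hb
  refine hT.eq_of_adj_of_adj (p.reverse.append q) (fun hw' => hw ?_) hwa hwb
  rw [SimpleGraph.Walk.mem_support_append_iff, SimpleGraph.Walk.support_reverse,
    List.mem_reverse] at hw'
  exact hw'.elim (hp w) (hq w)

lemma IsGoodPartialEmbedding.insert_update {A : Finset W} {f : W → V}
    (P : IsGoodPartialEmbedding G T m h t A f)
    (hT : T.IsAcyclic) {u w : W} {y : V} (hu : u ∈ A) (hw : w ∉ A) (huw : T.Adj u w)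
    (hxy : G.Adj (f u) y) (hy : y ∉ A.image f)
    (hgood : IsGood G T m h (insert w A) (Function.update f w y)) :
    IsGoodPartialEmbedding G T m h t (insert w A) (Function.update f w y) := by
  have hf : ∀ a ∈ A, Function.update f w y a = f a := fun a ha =>
    Function.update_of_ne (ne_of_mem_of_not_mem ha hw) y f
  refine ⟨mem_insert_of_mem P.root_mem, P.injOn.update_insert hw hy, ?_, ?_, hgood⟩
  · intro a b ha' hb' hab
    rcases mem_insert.mp ha' with rfl | ha <;> rcases mem_insert.mp hb' with rfl | hb
    · exact absurd hab (T.irrefl)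
    · obtain rfl := P.eq_of_adj hT hu hb hw huw.symm hab
      rw [Function.update_self, hf _ hu]
      exact hxy.symm
    · obtain rfl := P.eq_of_adj hT hu ha hw huw.symm hab.symm
      rw [Function.update_self, hf _ hu]
      exact hxy
    · rw [hf a ha, hf b hb]
      exact P.map_adj ha hb hab
  · intro a ha
    rcases mem_insert.mp ha with rfl | ha
    · obtain ⟨p, hp⟩ := P.exists_walk u hu
      refine ⟨p.concat huw, fun x hx => ?_⟩
      rw [SimpleGraph.Walk.support_concat, List.mem_append, List.mem_singleton] at hx
      exact hx.elim (fun hx => mem_insert_of_mem (hp x hx)) fun hx => hx ▸ mem_insert_self _ _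
    · obtain ⟨p, hp⟩ := P.exists_walk a ha
      exact ⟨p, fun x hx => mem_insert_of_mem (hp x hx)⟩

lemma isGoodPartialEmbedding_singleton {d : ℕ} (hG : IsExpander G (2 * (m : ℝ)) d)
    (hhd : 2 * h ≤ d) (hdeg : ∀ w, T.degree w ≤ h) (t : W) (v : V) :
    IsGoodPartialEmbedding G T m h t {t} (fun _ => v) where
  root_mem := mem_singleton_self t
  injOn := by simp
  map_adj a b ha hb hab := by
    rw [mem_singleton.mp ha, mem_singleton.mp hb] at hab
    exact absurd hab T.irrefl
  exists_walk a ha := by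
    obtain rfl := mem_singleton.mp ha
    exact ⟨.nil, by simp⟩
  isGood := isGood_singleton hG hhd hdeg t v

lemma IsGoodPartialEmbedding.exists_insert_update {A : Finset W} {f : W → V}
    (P : IsGoodPartialEmbedding G T m h t A f)
    (hT : T.IsTree) (hG : IsJoined G m m) (hdeg : ∀ w, T.degree w ≤ h)
    (hsize : Fintype.card W + (2 * h + 3) * m ≤ Fintype.card V) {b : W} (hb : b ∉ A) :
    ∃ w ∉ A, ∃ y, IsGoodPartialEmbedding G T m h t (insert w A) (Function.update f w y) := by
  obtain ⟨e, -, hu, hw⟩ := (hT.connected t b).some.exists_boundary_dart A P.root_mem hb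
  set u := e.fst
  set w := e.snd
  have huw : T.Adj u w := e.adj
  have hcap : 0 < capacity T h A f (f u) := by
    rw [capacity_apply_of_mem P.injOn hu]
    exact card_pos.mpr ⟨w, mem_sdiff.mpr ⟨(T.mem_neighborFinset u w).mpr huw, hw⟩⟩
  have hsizeA : #A + (2 * h + 3) * m ≤ Fintype.card V :=
    (Nat.add_le_add_right (card_le_univ A) _).trans hsize
  obtain ⟨y, hxy, hy, hyN⟩ :=
    P.isGood.exists_adj_forall_isTight_notMem_extNbhd hG P.injOn hdeg hsizeA hcap
  have hgood := P.isGood.of_capacity_le (image_update_insert hw)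
    (capacity_update_insert_le P.injOn hdeg hw hy)
    (capacity_update_insert_lt P.injOn hu huw hw hy) hyN
  exact ⟨w, hw, y, P.insert_update hT.isAcyclic hu hw huw hxy hy hgood⟩

lemma IsGoodPartialEmbedding.exists_extend_univ {A : Finset W} {f : W → V}
    (P : IsGoodPartialEmbedding G T m h t A f)
    (hT : T.IsTree) (hG : IsJoined G m m) (hdeg : ∀ w, T.degree w ≤ h)
    (hsize : Fintype.card W + (2 * h + 3) * m ≤ Fintype.card V) :
    ∃ g, IsGoodPartialEmbedding G T m h t univ g ∧ ∀ a ∈ A, g a = f a := by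
  by_cases hA : ∃ b, b ∉ A
  · obtain ⟨b, hb⟩ := hA
    obtain ⟨w, hw, y, P'⟩ := P.exists_insert_update hT hG hdeg hsize hb
    obtain ⟨g, hg, hgf⟩ := P'.exists_extend_univ hT hG hdeg hsize
    exact ⟨g, hg, fun a ha => (hgf a (mem_insert_of_mem ha)).trans
      (Function.update_of_ne (ne_of_mem_of_not_mem ha hw) y f)⟩
  · obtain rfl : A = univ := eq_univ_iff_forall.mpr (by simpa using hA)
    exact ⟨f, P, fun _ _ => rfl⟩
termination_by Fintype.card W - #A
decreasing_by
  have := card_lt_univ_of_notMem hw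
  rw [card_insert_of_notMem hw]
  omega

end PartialEmbedding

theorem tree_embedding_expander_general {V W : Type*} [Fintype V] [Fintype W]
    (G : SimpleGraph V) (T : SimpleGraph W) (n m d : ℕ)
    (hn : Fintype.card V = n)
    (hexp : IsExpander G (2 * (m : ℝ)) d) (hj : IsJoined G m m)
    (htree : T.IsTree) (hdeg : ∀ w : W, (T.degree w : ℝ) ≤ (d : ℝ) / 2)
    (hsize : Fintype.card W + (2 * d + 3) * m ≤ n) :
    ∀ (t : W) (v : V), ∃ f : T →g G, Function.Injective f ∧ f t = v := by
  intro t v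
  have hdeg' : ∀ w, T.degree w ≤ d / 2 := fun w =>
    (Nat.le_div_iff_mul_le two_pos).mpr (by exact_mod_cast (le_div_iff₀ two_pos).mp (hdeg w))
  have hsize' : Fintype.card W + (2 * (d / 2) + 3) * m ≤ Fintype.card V := by
    rw [hn]
    refine le_trans ?_ hsize
    gcongr
    omega
  obtain ⟨g, hg, hgt⟩ := (isGoodPartialEmbedding_singleton hexp (Nat.mul_div_le d 2) hdeg' t v
    ).exists_extend_univ htree hj hdeg' hsize'
  exact ⟨⟨g, fun hab => hg.map_adj (mem_univ _) (mem_univ _) hab⟩,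
    Set.injOn_univ.mp (by simpa using hg.injOn), hgt t (mem_singleton_self t)⟩

/-- Tree embedding in expanders. If `G` is a `(2m,d)`-expander on `n`
vertices (`d ≥ 4`) which is `m`-joined, and `T` is a tree with maximum degree at most `d/2`
and at most `n - (2d+3)m` vertices, then for every `t ∈ V(T)` and `v ∈ V(G)` there is an
embedding of `T` into `G` mapping `t` to `v`. -/
theorem tree_embedding_expander {V W : Type*} [Fintype V] [Fintype W]
    (G : SimpleGraph V) (T : SimpleGraph W) (n m d : ℕ) (hd : 4 ≤ d)
    (hn : Fintype.card V = n)
    (hexp : IsExpander G (2 * (m : ℝ)) d) (hj : IsJoined G m m)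
    (htree : T.IsTree) (hdeg : ∀ w : W, (T.degree w : ℝ) ≤ (d : ℝ) / 2)
    (hsize : Fintype.card W + (2 * d + 3) * m ≤ n) :
    ∀ (t : W) (v : V), ∃ f : T →g G, Function.Injective f ∧ f t = v :=
  tree_embedding_expander_general G T n m d hn hexp hj htree hdeg hsize
end

section
/- Let d, k, M, m, n satisfy d ≥ 2, k + 1 ≥ m, m ≤ M and M ≤ n/4. Suppose G is an n-vertex graph which is a (k,d)-expander and (m,M)-joined. If G is not Hamiltonian, then G has at least (1/16)·binom(n,2) boosters. -/
open scoped Classical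

/-- The length of a longest path in `G`. -/
noncomputable def maxPathLen {V : Type*} [Fintype V] (G : SimpleGraph V) : ℕ :=
  sSup {n | ∃ (u v : V) (w : G.Walk u v), w.IsPath ∧ w.length = n}

/-- `G` together with the (potential) edge `uv`. -/
def addEdge {V : Type*} (G : SimpleGraph V) (u v : V) : SimpleGraph V :=
  G ⊔ SimpleGraph.fromEdgeSet {s(u, v)}

/-- The pair of distinct vertices `{u,v}` is a booster for `G`: adding the edge `uv` makes `G`
Hamiltonian or strictly increases the length of a longest path. -/
noncomputable def IsBooster {V : Type*} [Fintype V] (G : SimpleGraph V) (u v : V) : Prop :=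
  u ≠ v ∧ ((addEdge G u v).IsHamiltonian ∨ maxPathLen G < maxPathLen (addEdge G u v))

/-- The set of booster pairs of `G`. -/
noncomputable def boosterPairs {V : Type*} [Fintype V] (G : SimpleGraph V) :
    Finset (Sym2 V) :=
  Finset.univ.filter fun e => ∃ u v : V, e = s(u, v) ∧ IsBooster G u v

/-!
Fix a longest path `P` starting at `a`, and let `R` be the set of last vertices of the paths
obtained from `P` by Pósa rotations. A vertex outside `R` with a neighbour in `R` is a neighbour
on `P` of some vertex of `R` (Pósa's lemma), so `|N(R)| ≤ 2|R| - 1`. Since `d ≥ 2`, expansion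
forces `|R| > k ≥ m - 1`; joinedness then leaves fewer than `M` vertices outside `R ∪ N(R)`,
whence `|R| ≥ n/4`.

Rotated paths are again longest, and the ends of a longest path form a booster: closing the path
with the new edge gives a Hamiltonian cycle, or, using an edge leaving the path, a longer path.
Rotating the reverse of a longest path ending at `r ∈ R` gives `r` at least `n/4` booster
partners, hence there are at least `n²/32 ≥ binom(n,2)/16` boosters.
-/

open Finset

section ExpanderJoined

variable {V : Type*} [Fintype V] {G : SimpleGraph V} {d : ℝ} {k m M : ℕ}

lemma IsJoined.pos (hj : IsJoined G m M) (hM : M ≤ Fintype.card V) : 0 < m := by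
  by_contra! hm
  obtain ⟨B, -, hB⟩ := exists_subset_card_eq (s := univ) (n := M) (by simpa using hM)
  obtain ⟨a, ha, -⟩ := hj ∅ B (disjoint_empty_left B) (by rw [card_empty]; omega) hB
  simp at ha

lemma IsJoined.four_le_card (hj : IsJoined G m M) (hmM : m ≤ M)
    (hMn : (M : ℝ) ≤ Fintype.card V / 4) : 4 ≤ Fintype.card V := by
  have h4M : 4 * M ≤ Fintype.card V := by
    have : ((4 * M : ℕ) : ℝ) ≤ Fintype.card V := by push_cast; linarith
    exact_mod_cast this
  have := hj.pos (by omega)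
  omega

lemma IsJoined.card_sdiff_union_extNbhd_lt (hj : IsJoined G m M) {A : Finset V}
    (hA : m ≤ #A) : #(univ \ (A ∪ extNbhd G A)) < M := by
  by_contra! hM
  obtain ⟨B, hBsub, hB⟩ := exists_subset_card_eq hM
  obtain ⟨A', hA'sub, hA'⟩ := exists_subset_card_eq hA
  have hdisj : Disjoint A' B := disjoint_of_subset_left hA'sub <| disjoint_of_subset_right hBsub <|
    (disjoint_sdiff (s := A ∪ extNbhd G A)).mono_left subset_union_left
  obtain ⟨a, ha, b, hb, hab⟩ := hj A' B hdisj hA' hB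
  have hb' := mem_sdiff.1 (hBsub hb)
  refine hb'.2 (mem_union_right _ ?_)
  simp only [extNbhd, mem_filter, mem_univ, true_and]
  exact ⟨fun hbA => hb'.2 (mem_union_left _ hbA), a, hA'sub ha, hab⟩

lemma IsExpander.lt_card_of_card_extNbhd_lt (hexp : IsExpander G k d) (hd : 2 ≤ d)
    {R : Finset V} (hR : R.Nonempty) (hN : #(extNbhd G R) < 2 * #R) : k < #R := by
  by_contra! hRk
  have h := hexp R hR (by exact_mod_cast hRk)
  have hN' : ((extNbhd G R).card : ℝ) < 2 * R.card := by exact_mod_cast hN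
  linarith [mul_le_mul_of_nonneg_right hd (Nat.cast_nonneg (α := ℝ) #R)]

lemma IsExpander.extNbhd_nonempty (hexp : IsExpander G k d) (hd : 0 < d)
    (hj : IsJoined G m M) (hkm : m ≤ k + 1) {T : Finset V} (hT : T.Nonempty)
    (hM : M ≤ #(univ \ T)) : (extNbhd G T).Nonempty := by
  rw [← card_pos]
  by_cases hTk : #T ≤ k
  · have h := hexp T hT (by exact_mod_cast hTk)
    have : (0 : ℝ) < #T := by exact_mod_cast hT.card_pos
    exact_mod_cast (by positivity : (0 : ℝ) < d * #T).trans_le h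
  · by_contra! h0
    have h := hj.card_sdiff_union_extNbhd_lt (A := T) (by omega)
    rw [card_eq_zero.1 (Nat.le_zero.1 h0), union_empty] at h
    omega

/-- `|R| > k ≥ m - 1`, so `n ≤ |R| + |N(R)| + (M - 1) ≤ 3|R| + M - 2`. -/
lemma quarter_card_le_of_card_extNbhd_lt (hexp : IsExpander G k d) (hd : 2 ≤ d)
    (hj : IsJoined G m M) (hkm : m ≤ k + 1) (hMn : (M : ℝ) ≤ Fintype.card V / 4)
    {R : Finset V} (hR : R.Nonempty) (hN : #(extNbhd G R) < 2 * #R) :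
    (Fintype.card V : ℝ) / 4 ≤ #R := by
  have hkR := hexp.lt_card_of_card_extNbhd_lt hd hR hN
  have hrest := hj.card_sdiff_union_extNbhd_lt (A := R) (by omega)
  have hcover := card_le_card_sdiff_add_card (s := univ) (t := R ∪ extNbhd G R)
  have hunion := card_union_le R (extNbhd G R)
  rw [card_univ] at hcover
  have : (Fintype.card V : ℝ) + 2 ≤ 3 * #R + M := by exact_mod_cast (by omega)
  linarith

end ExpanderJoined

section AddEdge

variable {V : Type*} {G : SimpleGraph V} {u v : V}

lemma addEdge_comm (G : SimpleGraph V) (u v : V) : addEdge G u v = addEdge G v u := by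
  simp [addEdge, Sym2.eq_swap]

lemma le_addEdge : G ≤ addEdge G u v := le_sup_left

lemma addEdge_adj_self (h : u ≠ v) : (addEdge G u v).Adj u v :=
  Or.inr ⟨rfl, h⟩

end AddEdge

section BoosterGraph

variable {V : Type*} [Fintype V]

lemma isBooster_comm {G : SimpleGraph V} {u v : V} : IsBooster G u v ↔ IsBooster G v u := by
  simp only [IsBooster, ne_comm, addEdge_comm G u v]

def boosterGraph (G : SimpleGraph V) : SimpleGraph V where
  Adj := IsBooster G
  symm := ⟨fun _ _ => isBooster_comm.1⟩
  loopless := ⟨fun _ h => h.1 rfl⟩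

@[simp]
lemma boosterGraph_adj {G : SimpleGraph V} {u v : V} :
    (boosterGraph G).Adj u v ↔ IsBooster G u v :=
  Iff.rfl

lemma boosterPairs_eq_edgeFinset (G : SimpleGraph V) :
    boosterPairs G = (boosterGraph G).edgeFinset := by
  ext e
  induction e using Sym2.ind with
  | _ u v =>
    rw [SimpleGraph.mem_edgeFinset, SimpleGraph.mem_edgeSet, boosterGraph_adj]
    simp only [boosterPairs, mem_filter, mem_univ, true_and, Sym2.eq_iff]
    constructor
    · rintro ⟨a, b, ⟨rfl, rfl⟩ | ⟨rfl, rfl⟩, h⟩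
      exacts [h, isBooster_comm.1 h]
    · exact fun h => ⟨u, v, Or.inl ⟨rfl, rfl⟩, h⟩

end BoosterGraph

namespace SimpleGraph.Walk

variable {V : Type*} {G : SimpleGraph V} {a x₀ : V}

lemma IsPath.ne_of_length_pos {u v : V} {p : G.Walk u v} (hp : p.IsPath) (h : 0 < p.length) :
    u ≠ v := by
  rintro rfl
  exact h.ne' (length_eq_zero_iff.2 (isPath_iff_nil.1 hp))

/-- Walks obtained from `p₀` by repeated Pósa rotations: if `x` is the last vertex of
`a ⋯ w z ⋯ x` and `x ~ w`, the rotation is `a ⋯ w x ⋯ z`. -/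
inductive IsPosaRotation (p₀ : G.Walk a x₀) : {x : V} → G.Walk a x → Prop
  | refl : IsPosaRotation p₀ p₀
  | rotate {x w z : V} {q : G.Walk a w} {hwz : G.Adj w z} {r : G.Walk z x} (hxw : G.Adj x w) :
      IsPosaRotation p₀ (q.append (cons hwz r)) →
      IsPosaRotation p₀ (q.append (cons hxw.symm r.reverse))

namespace IsPosaRotation

variable {p₀ : G.Walk a x₀} {x : V} {p : G.Walk a x}

lemma support_perm (h : IsPosaRotation p₀ p) : p.support.Perm p₀.support := by
  induction h with
  | refl => rfl
  | rotate hxw _ ih =>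
    refine List.Perm.trans ?_ ih
    simp only [support_append, support_cons, List.tail_cons, support_reverse]
    exact (List.reverse_perm _).append_left _

lemma length_eq (h : IsPosaRotation p₀ p) : p.length = p₀.length := by
  induction h with
  | refl => rfl
  | rotate hxw _ ih => simpa using ih

lemma isPath (h : IsPosaRotation p₀ p) (hp₀ : p₀.IsPath) : p.IsPath :=
  IsPath.mk' (h.support_perm.nodup_iff.2 hp₀.support_nodup)

end IsPosaRotation

variable [Fintype V]

noncomputable def posaEnds (p₀ : G.Walk a x₀) : Finset V :=
  univ.filter fun x => ∃ p : G.Walk a x, IsPosaRotation p₀ p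

lemma mem_posaEnds {p₀ : G.Walk a x₀} {x : V} :
    x ∈ posaEnds p₀ ↔ ∃ p : G.Walk a x, IsPosaRotation p₀ p := by
  simp [posaEnds]

lemma IsPosaRotation.mem_posaEnds {p₀ : G.Walk a x₀} {x : V} {p : G.Walk a x}
    (h : IsPosaRotation p₀ p) : x ∈ posaEnds p₀ :=
  Walk.mem_posaEnds.2 ⟨p, h⟩

/-- A rotation removes an edge `wz` and adds an edge `xw`, where `x` and `z` are rotation ends and
`w` is a path-neighbour of `z`; none of these edges meets `y`. -/
lemma IsPosaRotation.mem_edges_iff {p₀ : G.Walk a x₀} {x : V} {p : G.Walk a x}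
    (h : IsPosaRotation p₀ p) {y : V} (hy : y ∉ posaEnds p₀)
    (hyR : ∀ z ∈ posaEnds p₀, s(y, z) ∉ p₀.edges) (v : V) :
    s(y, v) ∈ p.edges ↔ s(y, v) ∈ p₀.edges := by
  induction h generalizing v with
  | refl => rfl
  | @rotate x w z q hwz r hxw h ih =>
    have hz := (h.rotate hxw).mem_posaEnds
    have hyx : y ≠ x := fun hyx => hy (hyx ▸ h.mem_posaEnds)
    have hyz : y ≠ z := fun hyz => hy (hyz ▸ hz)
    have hyw : y ≠ w := by
      rintro rfl
      exact hyR z hz ((ih z).1 (by simp))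
    rw [← ih v]
    simp [hyx, hyz, hyw]

variable {u v : V} {d : ℝ} {k m M : ℕ}

lemma IsPath.card_filter_mem_edges_le {p : G.Walk u v} (hp : p.IsPath) (y : V) :
    #{w | s(y, w) ∈ p.edges} ≤ 2 := by
  by_cases hy : y ∈ p.support
  · obtain ⟨q, r, hq, hr, rfl⟩ := hp.mem_support_iff_exists_append.1 hy
    calc #{w | s(y, w) ∈ (q.append r).edges}
        ≤ #{q.penultimate, r.snd} := by
          refine card_le_card fun w hw => ?_
          simp only [mem_filter, mem_univ, true_and, edges_append, List.mem_append] at hw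
          rcases hw with hw | hw
          · simp [hq.eq_penultimate_of_mem_edges hw]
          · simp [hr.eq_snd_of_mem_edges hw]
      _ ≤ 2 := card_le_two
  · simp [filter_eq_empty_iff.2 fun w _ hw => hy (p.fst_mem_support_of_mem_edges hw)]

lemma IsPath.card_filter_mem_edges_end_le {p : G.Walk u v} (hp : p.IsPath) :
    #{w | s(v, w) ∈ p.edges} ≤ 1 := by
  refine (card_le_card fun w hw => ?_).trans (card_singleton p.penultimate).le
  simp only [mem_filter, mem_univ, true_and] at hw
  simp [hp.eq_penultimate_of_mem_edges hw]

lemma IsPath.length_le_maxPathLen {p : G.Walk u v} (hp : p.IsPath) :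
    p.length ≤ maxPathLen G :=
  le_csSup ⟨Fintype.card V, by rintro _ ⟨_, _, q, hq, rfl⟩; exact hq.length_lt.le⟩
    ⟨u, v, p, hp, rfl⟩

def IsLongestPath (p : G.Walk u v) : Prop := p.IsPath ∧ p.length = maxPathLen G

lemma exists_isLongestPath (G : SimpleGraph V) [Nonempty V] :
    ∃ (u v : V) (p : G.Walk u v), p.IsLongestPath := by
  obtain ⟨u⟩ := ‹Nonempty V›
  obtain ⟨u, v, p, hp, hlen⟩ := Nat.sSup_mem
    (s := {n | ∃ (u v : V) (w : G.Walk u v), w.IsPath ∧ w.length = n})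
    ⟨0, u, u, nil, IsPath.nil, rfl⟩
    ⟨Fintype.card V, by rintro _ ⟨_, _, q, hq, rfl⟩; exact hq.length_lt.le⟩
  exact ⟨u, v, p, hp, hlen⟩

lemma IsLongestPath.reverse {p : G.Walk u v} (hp : p.IsLongestPath) : p.reverse.IsLongestPath :=
  ⟨hp.1.reverse, by rw [length_reverse, hp.2]⟩

lemma IsPosaRotation.isLongestPath {p₀ : G.Walk a x₀} {x : V} {p : G.Walk a x}
    (h : IsPosaRotation p₀ p) (hp₀ : p₀.IsLongestPath) : p.IsLongestPath :=
  ⟨h.isPath hp₀.1, h.length_eq.trans hp₀.2⟩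

lemma IsLongestPath.mem_support_of_adj {p : G.Walk u v} (hp : p.IsLongestPath) {w : V}
    (h : G.Adj v w) : w ∈ p.support := by
  by_contra hw
  have := ((concat_isPath_iff h).2 ⟨hp.1, hw⟩).length_le_maxPathLen
  rw [length_concat, hp.2] at this
  omega

/-- Pósa's lemma. -/
lemma IsLongestPath.exists_mem_posaEnds_of_mem_extNbhd {p₀ : G.Walk a x₀}
    (hp₀ : p₀.IsLongestPath) {y : V} (hy : y ∈ extNbhd G (posaEnds p₀)) :
    ∃ z ∈ posaEnds p₀, s(y, z) ∈ p₀.edges := by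
  by_contra! hnbr
  simp only [extNbhd, mem_filter, mem_univ, true_and] at hy
  obtain ⟨hyR, x, hxR, hxy⟩ := hy
  obtain ⟨p, hp⟩ := mem_posaEnds.1 hxR
  obtain ⟨q, r', rfl⟩ := mem_support_iff_exists_append.1
    ((hp.isLongestPath hp₀).mem_support_of_adj hxy)
  obtain ⟨z, hyz, r, rfl⟩ := exists_eq_cons_of_ne (by rintro rfl; exact hyR hxR) r'
  exact hnbr z (hp.rotate hxy).mem_posaEnds ((hp.mem_edges_iff hyR hnbr z).1 (by simp))

lemma IsLongestPath.card_extNbhd_posaEnds_lt {p₀ : G.Walk a x₀} (hp₀ : p₀.IsLongestPath) :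
    #(extNbhd G (posaEnds p₀)) < 2 * #(posaEnds p₀) := by
  set R := posaEnds p₀
  set nbrs : V → Finset V := fun z => {w | s(z, w) ∈ p₀.edges}
  have hx₀ : x₀ ∈ R := IsPosaRotation.refl.mem_posaEnds
  have hsub : extNbhd G R ⊆ R.biUnion nbrs := fun y hy => by
    obtain ⟨z, hz, hzy⟩ := hp₀.exists_mem_posaEnds_of_mem_extNbhd hy
    exact mem_biUnion.2 ⟨z, hz, by simpa [nbrs, Sym2.eq_swap] using hzy⟩
  have hsum : ∑ z ∈ R.erase x₀, #(nbrs z) ≤ ∑ _z ∈ R.erase x₀, 2 :=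
    sum_le_sum fun z _ => hp₀.1.card_filter_mem_edges_le z
  have hR := card_erase_add_one hx₀
  calc #(extNbhd G R) ≤ ∑ z ∈ R, #(nbrs z) := (card_le_card hsub).trans card_biUnion_le
    _ = #(nbrs x₀) + ∑ z ∈ R.erase x₀, #(nbrs z) := (add_sum_erase _ _ hx₀).symm
    _ < 2 * #R := by
      have : #(nbrs x₀) ≤ 1 := hp₀.1.card_filter_mem_edges_end_le
      simp only [sum_const, smul_eq_mul] at hsum
      omega

lemma IsLongestPath.quarter_card_le_card_posaEnds {p₀ : G.Walk a x₀} (hp₀ : p₀.IsLongestPath)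
    (hexp : IsExpander G k d) (hd : 2 ≤ d) (hj : IsJoined G m M) (hkm : m ≤ k + 1)
    (hMn : (M : ℝ) ≤ Fintype.card V / 4) :
    (Fintype.card V : ℝ) / 4 ≤ #(posaEnds p₀) :=
  quarter_card_le_of_card_extNbhd_lt hexp hd hj hkm hMn
    ⟨x₀, IsPosaRotation.refl.mem_posaEnds⟩ hp₀.card_extNbhd_posaEnds_lt

lemma posaEnds_subset_support (p₀ : G.Walk a x₀) : posaEnds p₀ ⊆ p₀.support.toFinset := by
  intro x hx
  obtain ⟨p, hp⟩ := mem_posaEnds.1 hx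
  exact List.mem_toFinset.2 (hp.support_perm.subset p.end_mem_support)

lemma IsPath.isHamiltonian_addEdge {p : G.Walk u v} (hp : p.IsPath)
    (hcov : ∀ w, w ∈ p.support) (h3 : 3 ≤ Fintype.card V) : (addEdge G u v).IsHamiltonian := by
  have hlen := (hp.isHamiltonian_of_mem hcov).length_eq
  have huv : u ≠ v := hp.ne_of_length_pos (by omega)
  refine fun _ => ⟨v, cons (addEdge_adj_self huv).symm (p.mapLe le_addEdge), ?_⟩
  rw [isHamiltonianCycle_iff_isCycle_and_length_eq, cons_isCycle_iff, isPath_mapLe,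
    edges_mapLe_eq_edges, length_cons, length_mapLe]
  refine ⟨⟨hp, fun he => ?_⟩, by omega⟩
  have := hp.length_eq_one_of_mem_edges (Sym2.eq_swap ▸ he)
  omega

/-- Closing `p` with the edge `vu` gives a closed walk through all of `p`; opening it at `y`
and leaving along `yw` gives a path one longer than `p`. -/
lemma IsPath.length_lt_maxPathLen_addEdge {p : G.Walk u v} (hp : p.IsPath) (huv : u ≠ v)
    {y w : V} (hy : y ∈ p.support) (hw : w ∉ p.support) (hyw : G.Adj y w) :
    p.length < maxPathLen (addEdge G u v) := by
  set c := cons (addEdge_adj_self huv).symm (p.mapLe (le_addEdge (u := u) (v := v)))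
  have hyc : y ∈ c.support := by simp [c, hy]
  obtain ⟨z, hyz, t, hct⟩ : ∃ (z : V) (h : (addEdge G u v).Adj y z)
      (t : (addEdge G u v).Walk z y), c.rotate y hyc = cons h t := by
    cases hrot : c.rotate y hyc with
    | nil => simpa [c] using congrArg length hrot
    | cons h t => exact ⟨_, h, t, rfl⟩
  have hperm : t.support.Perm p.support := by
    have := (support_rotate c y hyc).perm
    rwa [hct, support_cons, List.tail_cons, support_cons, List.tail_cons,
      support_mapLe_eq_support] at this
  have ht : (t.concat (le_addEdge hyw)).IsPath :=
    (concat_isPath_iff _).2 ⟨IsPath.mk' (hperm.nodup_iff.2 hp.support_nodup),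
      fun hwt => hw (hperm.subset hwt)⟩
  have hlen : p.length = t.length := by simpa [c] using congrArg length hct
  have := ht.length_le_maxPathLen
  rw [length_concat] at this
  omega

lemma IsLongestPath.isBooster {p : G.Walk u v} (hp : p.IsLongestPath)
    (h3 : 3 ≤ Fintype.card V)
    (hout : (∀ w, w ∈ p.support) ∨ ∃ y ∈ p.support, ∃ w ∉ p.support, G.Adj y w) :
    IsBooster G u v := by
  have huv : u ≠ v := by
    refine hp.1.ne_of_length_pos ?_
    rcases hout with hcov | ⟨y, -, w, -, hyw⟩
    · have := (hp.1.isHamiltonian_of_mem hcov).length_eq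
      omega
    · have := (IsPath.of_adj hyw).length_le_maxPathLen
      rw [hyw.length_toWalk, ← hp.2] at this
      omega
  rcases hout with hcov | ⟨y, hy, w, hw, hyw⟩
  · exact ⟨huv, Or.inl (hp.1.isHamiltonian_addEdge hcov h3)⟩
  · exact ⟨huv, Or.inr (hp.2 ▸ hp.1.length_lt_maxPathLen_addEdge huv hy hw hyw)⟩

lemma IsLongestPath.isBooster_of_isExpander {p : G.Walk u v} (hp : p.IsLongestPath)
    (hexp : IsExpander G k d) (hd : 2 ≤ d) (hj : IsJoined G m M) (hkm : m ≤ k + 1)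
    (hmM : m ≤ M) (hMn : (M : ℝ) ≤ Fintype.card V / 4) : IsBooster G u v := by
  refine hp.isBooster (by linarith [hj.four_le_card hmM hMn]) ?_
  obtain hcov | ⟨w₀, hw₀⟩ := forall_or_exists_not (· ∈ p.support)
  · exact Or.inl hcov
  set T : Finset V := {w | w ∉ p.support}
  have hM : M ≤ #(univ \ T) := by
    have hR := hp.quarter_card_le_card_posaEnds hexp hd hj hkm hMn
    have hsub : posaEnds p ⊆ univ \ T := fun x hx => by
      simpa [T] using posaEnds_subset_support p hx
    have : (M : ℝ) ≤ #(univ \ T) := hMn.trans (hR.trans (by exact_mod_cast card_le_card hsub))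
    exact_mod_cast this
  obtain ⟨y, hy⟩ := hexp.extNbhd_nonempty (by linarith) hj hkm
    ⟨w₀, by simpa [T] using hw₀⟩ hM
  simp only [extNbhd, T, mem_filter, mem_univ, true_and, not_not] at hy
  obtain ⟨hy, w, hw, hwy⟩ := hy
  exact Or.inr ⟨y, hy, w, hw, hwy.symm⟩

lemma IsLongestPath.quarter_card_le_degree_boosterGraph {p : G.Walk u v}
    (hp : p.IsLongestPath) (hexp : IsExpander G k d) (hd : 2 ≤ d) (hj : IsJoined G m M)
    (hkm : m ≤ k + 1) (hmM : m ≤ M) (hMn : (M : ℝ) ≤ Fintype.card V / 4) :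
    (Fintype.card V : ℝ) / 4 ≤ (boosterGraph G).degree u := by
  refine (hp.quarter_card_le_card_posaEnds hexp hd hj hkm hMn).trans ?_
  rw [← card_neighborFinset_eq_degree]
  refine Nat.cast_le.2 (card_le_card fun x hx => ?_)
  obtain ⟨q, hq⟩ := mem_posaEnds.1 hx
  simpa using
    (hq.isLongestPath hp).isBooster_of_isExpander hexp hd hj hkm hmM hMn

lemma IsLongestPath.sq_le_two_mul_card_boosterPairs {p₀ : G.Walk a x₀} (hp₀ : p₀.IsLongestPath)
    (hexp : IsExpander G k d) (hd : 2 ≤ d) (hj : IsJoined G m M) (hkm : m ≤ k + 1)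
    (hmM : m ≤ M) (hMn : (M : ℝ) ≤ Fintype.card V / 4) :
    ((Fintype.card V : ℝ) / 4) ^ 2 ≤ 2 * #(boosterPairs G) := by
  set N : ℝ := (Fintype.card V : ℝ)
  have hdeg : ∀ r ∈ posaEnds p₀, N / 4 ≤ (boosterGraph G).degree r := fun r hr => by
    obtain ⟨p, hp⟩ := mem_posaEnds.1 hr
    exact (hp.isLongestPath hp₀).reverse.quarter_card_le_degree_boosterGraph
      hexp hd hj hkm hmM hMn
  calc (N / 4) ^ 2 ≤ #(posaEnds p₀) * (N / 4) := by
        rw [sq]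
        gcongr
        exact hp₀.quarter_card_le_card_posaEnds hexp hd hj hkm hMn
    _ ≤ ∑ r ∈ posaEnds p₀, ((boosterGraph G).degree r : ℝ) := by
      simpa using sum_le_sum hdeg
    _ ≤ ∑ r, ((boosterGraph G).degree r : ℝ) :=
      sum_le_sum_of_subset_of_nonneg (subset_univ _) fun _ _ _ => by positivity
    _ = 2 * #(boosterPairs G) := by
      rw [boosterPairs_eq_edgeFinset]
      exact_mod_cast (boosterGraph G).sum_degrees_eq_twice_card_edges

end SimpleGraph.Walk

theorem boosters_in_expanders_general {V : Type*} [Fintype V] (G : SimpleGraph V)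
    (d : ℝ) (k m M n : ℕ) (hd : 2 ≤ d) (hkm : m ≤ k + 1) (hmM : m ≤ M)
    (hMn : (M : ℝ) ≤ (n : ℝ) / 4) (hn : Fintype.card V = n)
    (hexp : IsExpander G k d) (hj : IsJoined G m M) :
    (1 / 16 : ℝ) * (n.choose 2 : ℝ) ≤ ((boosterPairs G).card : ℝ) := by
  subst hn
  have : Nonempty V := Fintype.card_pos_iff.1 (by linarith [hj.four_le_card hmM hMn])
  obtain ⟨a, x₀, p₀, hp₀⟩ := SimpleGraph.Walk.exists_isLongestPath G
  have := hp₀.sq_le_two_mul_card_boosterPairs hexp hd hj hkm hmM hMn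
  rw [Nat.cast_choose_two]
  nlinarith

/-- A non-Hamiltonian `(k,d)`-expander (`d ≥ 2`, `k+1 ≥ m`) on `n` vertices
which is `(m,M)`-joined (`m ≤ M ≤ n/4`) has at least `(1/16)·binom(n,2)` boosters. -/
theorem boosters_in_expanders {V : Type*} [Fintype V] (G : SimpleGraph V)
    (d : ℝ) (k m M n : ℕ) (hd : 2 ≤ d) (hkm : m ≤ k + 1) (hmM : m ≤ M)
    (hMn : (M : ℝ) ≤ (n : ℝ) / 4) (hn : Fintype.card V = n)
    (hexp : IsExpander G k d) (hj : IsJoined G m M)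
    (hnotham : ¬ G.IsHamiltonian) :
    (1 / 16 : ℝ) * (n.choose 2 : ℝ) ≤ ((boosterPairs G).card : ℝ) :=
  boosters_in_expanders_general G d k m M n hd hkm hmM hMn hn hexp hj
end

section
/- Let α, δ > 0 satisfy 1024δ ≤ α² and δ ≤ 1/e. For p ≥ 1/n, let G = G(n,p) be the binomial random graph on a vertex set V of size n, and let (𝓕, 𝓑) be a (δp, α)-boosterable family on V. Then with probability tending to 1 as n → ∞, every F ∈ 𝓕 with F ⊆ G satisfies |B_F ∩ E(G)| > αpn²/2. -/
/-! The bad event for a single `F` asks for the edges of `F` to be present and for few of the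
disjoint pairs `B_F` to be present; by independence its probability is `p ^ e(F)` times a binomial
lower tail, which is at most `exp (-α p n² / 8)`. Since every `F` has at most `δ p n²` edges,
`∑_F p ^ e(F)` is at most the sum of `p ^ #S` over sets `S` of at most `δ p n²` pairs,
which is `≤ exp (α p n² / 16)`, so a union bound leaves a failure
probability of at most `exp (-α p n² / 16) ≤ exp (-α n / 16)`. Both estimates are instances of the
exponential-moment bound `∑_{#S ≤ K} a ^ #S b ^ (#U - #S) ≤ e ^ (λ K) (a e ^ (-λ) + b) ^ #U`,
with `e ^ (-λ) = 1/2` for the tail and `e ^ (-λ) = √δ` for the count. -/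

open MeasureTheory
open scoped Classical

/-- Bernoulli measure on `Bool` with parameter `p` (capped into `[0,1]`). -/
noncomputable def bernoulliBool (p : ℝ) : Measure Bool :=
  (PMF.bernoulli (min (Real.toNNReal p) 1) (min_le_right _ _)).toMeasure

instance (p : ℝ) : IsProbabilityMeasure (bernoulliBool p) :=
  PMF.toMeasure.isProbabilityMeasure _

/-- The Erdős–Rényi random graph measure: each unordered pair of vertices of `Fin N`
is an edge independently with probability `p`. -/
noncomputable def gnp (N : ℕ) (p : ℝ) : Measure (Sym2 (Fin N) → Bool) :=
  Measure.pi fun _ => bernoulliBool p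

/-- The simple graph determined by an outcome `ω`. -/
def graphOf {N : ℕ} (ω : Sym2 (Fin N) → Bool) : SimpleGraph (Fin N) :=
  SimpleGraph.fromEdgeSet {e | ω e = true}

/-- `r(n)`: the cycle Ramsey number, `2n-1` for odd `n` and `3n/2 - 1` for even `n`. -/
def cycleRamsey (n : ℕ) : ℕ := if Odd n then 2 * n - 1 else 3 * n / 2 - 1

/-- `G` contains a cycle of length `ℓ`. -/
def hasCycle {V : Type*} (G : SimpleGraph V) (ℓ : ℕ) : Prop :=
  ∃ (v : V) (w : G.Walk v v), w.IsCycle ∧ w.length = ℓ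

/-- The colouring `c` of the edges of `G` admits a monochromatic cycle of length `n`. -/
def hasMonoCycle {V : Type*} (G : SimpleGraph V) (c : Sym2 V → Bool) (n : ℕ) : Prop :=
  ∃ (b : Bool) (v : V) (w : G.Walk v v),
    w.IsCycle ∧ w.length = n ∧ ∀ e ∈ w.edges, c e = b
/-- `(𝓕, 𝓑)` is a `(δ', α)`-boosterable family on `Fin n`: each `F ∈ 𝓕` has at most `δ'n²`
edges, and `B_F` is a set of at least `αn²` unordered pairs of distinct vertices disjoint
from `E(F)`. -/
noncomputable def Boosterable {n : ℕ} (𝓕 : Set (SimpleGraph (Fin n)))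
    (𝓑 : SimpleGraph (Fin n) → Finset (Sym2 (Fin n))) (δ' α : ℝ) : Prop :=
  ∀ F ∈ 𝓕, ((F.edgeFinset.card : ℝ) ≤ δ' * (n : ℝ) ^ 2) ∧
    (∀ e ∈ 𝓑 F, ¬ e.IsDiag ∧ e ∉ F.edgeSet) ∧
    (α * (n : ℝ) ^ 2 ≤ ((𝓑 F).card : ℝ))


open Finset Real

theorem sum_powerset_filter_card_le_exp_mul_pow {ι : Type*} (U : Finset ι) {a b l K : ℝ}
    (ha : 0 ≤ a) (hb : 0 ≤ b) (hl : 0 ≤ l) :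
    ∑ S ∈ U.powerset with (#S : ℝ) ≤ K, a ^ #S * b ^ (#U - #S)
      ≤ exp (l * K) * (a * exp (-l) + b) ^ #U := by
  calc ∑ S ∈ U.powerset with (#S : ℝ) ≤ K, a ^ #S * b ^ (#U - #S)
      ≤ ∑ S ∈ U.powerset with (#S : ℝ) ≤ K,
          exp (l * K) * ((a * exp (-l)) ^ #S * b ^ (#U - #S)) := by
        refine sum_le_sum fun S hS => ?_
        have hSK : l * #S ≤ l * K := mul_le_mul_of_nonneg_left (mem_filter.1 hS).2 hl
        have hsplit : a ^ #S = exp (l * #S) * (a * exp (-l)) ^ #S := by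
          rw [mul_pow, ← exp_nat_mul, mul_left_comm, ← exp_add]; ring_nf; simp
        rw [hsplit, mul_assoc]
        gcongr
    _ ≤ ∑ S ∈ U.powerset, exp (l * K) * ((a * exp (-l)) ^ #S * b ^ (#U - #S)) :=
        sum_le_sum_of_subset_of_nonneg (filter_subset _ _) fun _ _ _ => by positivity
    _ = exp (l * K) * (a * exp (-l) + b) ^ #U := by
        rw [← mul_sum, sum_pow_mul_eq_add_pow]

theorem sum_powerset_filter_card_le_exp_neg {ι : Type*} (U : Finset ι) {p t : ℝ}
    (hp0 : 0 ≤ p) (hp1 : p ≤ 1) (ht : t ≤ p * #U / 2) :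
    ∑ S ∈ U.powerset with (#S : ℝ) ≤ t, p ^ #S * (1 - p) ^ (#U - #S)
      ≤ exp (-(p * #U) / 8) := by
  have hbase : p * exp (-log 2) + (1 - p) ≤ exp (-(p / 2)) := by
    rw [exp_neg, exp_log two_pos]
    linarith [add_one_le_exp (-(p / 2))]
  have hlog2 : log 2 < 3 / 4 := by linarith [log_two_lt_d9]
  calc _ ≤ exp (log 2 * t) * (p * exp (-log 2) + (1 - p)) ^ #U :=
        sum_powerset_filter_card_le_exp_mul_pow U hp0 (by linarith) (log_nonneg one_le_two)
    _ ≤ exp (log 2 * t) * exp (-(p / 2)) ^ #U := by gcongr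
    _ = exp (log 2 * t - p * #U / 2) := by rw [← exp_nat_mul, ← exp_add]; ring_nf
    _ ≤ exp (-(p * #U) / 8) := by
        gcongr
        nlinarith [log_nonneg one_le_two, mul_nonneg hp0 (Nat.cast_nonneg (α := ℝ) #U)]

theorem sum_powerset_filter_card_pow_le_exp {ι : Type*} (U : Finset ι) {p δ N : ℝ}
    (hp : 0 ≤ p) (hδ0 : 0 < δ) (hδ1 : δ ≤ 1) (hU : p * #U ≤ N) :
    ∑ S ∈ U.powerset with (#S : ℝ) ≤ δ * N, p ^ #S ≤ exp (2 * √δ * N) := by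
  have hs0 : 0 < √δ := sqrt_pos.2 hδ0
  have hs1 : √δ ≤ 1 := sqrt_le_one.2 hδ1
  have hN : 0 ≤ N := le_trans (by positivity) hU
  have hl : 0 ≤ -log √δ := neg_nonneg.2 (log_nonpos hs0.le hs1)
  have hlδ : -log √δ * δ ≤ √δ := by
    have := log_le_sub_one_of_pos (inv_pos.2 hs0)
    rw [log_inv] at this
    calc -log √δ * δ ≤ (√δ)⁻¹ * δ := by gcongr; linarith
      _ = (√δ)⁻¹ * (√δ * √δ) := by rw [mul_self_sqrt hδ0.le]
      _ = √δ := by field_simp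
  have h := sum_powerset_filter_card_le_exp_mul_pow U (K := δ * N) hp zero_le_one hl
  simp only [one_pow, mul_one, neg_neg, exp_log hs0] at h
  calc _ ≤ exp (-log √δ * (δ * N)) * (p * √δ + 1) ^ #U := h
    _ ≤ exp (-log √δ * (δ * N)) * exp (p * √δ) ^ #U := by
        gcongr; linarith [add_one_le_exp (p * √δ)]
    _ = exp (-log √δ * δ * N + √δ * (p * #U)) := by rw [← exp_nat_mul, ← exp_add]; ring_nf
    _ ≤ exp (2 * √δ * N) := by
        gcongr
        nlinarith [mul_le_mul_of_nonneg_right hlδ hN, mul_le_mul_of_nonneg_left hU hs0.le]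

instance (N : ℕ) (p : ℝ) : IsProbabilityMeasure (gnp N p) :=
  Measure.pi.instIsProbabilityMeasure _

theorem bernoulliBool_true {p : ℝ} (hp1 : p ≤ 1) : bernoulliBool p {true} = ENNReal.ofReal p := by
  rw [bernoulliBool, PMF.toMeasure_apply_singleton _ _ (measurableSet_singleton _)]
  simp [PMF.bernoulli_apply, min_eq_left (Real.toNNReal_le_one.mpr hp1)]
  rfl

theorem bernoulliBool_false {p : ℝ} (hp0 : 0 ≤ p) (hp1 : p ≤ 1) :
    bernoulliBool p {false} = ENNReal.ofReal (1 - p) := by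
  rw [bernoulliBool, PMF.toMeasure_apply_singleton _ _ (measurableSet_singleton _)]
  simp [PMF.bernoulli_apply, min_eq_left (Real.toNNReal_le_one.mpr hp1)]
  rw [ENNReal.ofReal_sub _ hp0, ENNReal.ofReal_one]
  rfl

theorem pi_bernoulliBool_cylinder {ι : Type*} [Fintype ι] {p : ℝ} (hp0 : 0 ≤ p) (hp1 : p ≤ 1)
    {A Z : Finset ι} (hAZ : Disjoint A Z) :
    Measure.pi (fun _ : ι => bernoulliBool p) {ω | (∀ i ∈ A, ω i = true) ∧ ∀ i ∈ Z, ω i = false}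
      = ENNReal.ofReal (p ^ #A * (1 - p) ^ #Z) := by
  have hset : {ω : ι → Bool | (∀ i ∈ A, ω i = true) ∧ ∀ i ∈ Z, ω i = false}
      = ((A ∪ Z : Finset ι) : Set ι).pi fun i => {decide (i ∈ A)} := by
    ext ω
    simp only [Set.mem_ofPred_eq, Set.mem_pi, coe_union, Set.mem_union, mem_coe,
      Set.mem_singleton_iff]
    constructor
    · rintro ⟨hA, hZ⟩ i (hi | hi)
      · simp [hi, hA i hi]
      · simp [disjoint_right.1 hAZ hi, hZ i hi]
    · intro h
      exact ⟨fun i hi => by simpa [hi] using h i (Or.inl hi),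
        fun i hi => by simpa [disjoint_right.1 hAZ hi] using h i (Or.inr hi)⟩
  rw [hset, Measure.pi_pi_finset, prod_union hAZ,
    prod_eq_pow_card fun i hi => by rw [decide_eq_true hi, bernoulliBool_true hp1],
    prod_eq_pow_card fun i hi => by
      rw [decide_eq_false (disjoint_right.1 hAZ hi), bernoulliBool_false hp0 hp1],
    ENNReal.ofReal_mul (by positivity), ENNReal.ofReal_pow hp0,
    ENNReal.ofReal_pow (sub_nonneg.2 hp1)]

theorem mem_edgeFinset_graphOf {N : ℕ} {ω : Sym2 (Fin N) → Bool} {e : Sym2 (Fin N)} :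
    e ∈ (graphOf ω).edgeFinset ↔ ω e = true ∧ ¬e.IsDiag := by
  rw [SimpleGraph.mem_edgeFinset, graphOf, SimpleGraph.edgeSet_fromEdgeSet]
  simp

theorem le_graphOf_iff {N : ℕ} {F : SimpleGraph (Fin N)} {ω : Sym2 (Fin N) → Bool} :
    F ≤ graphOf ω ↔ ∀ e ∈ F.edgeFinset, ω e = true := by
  rw [← SimpleGraph.edgeFinset_subset_edgeFinset]
  exact ⟨fun h e he => (mem_edgeFinset_graphOf.1 (h he)).1, fun h e he =>
    mem_edgeFinset_graphOf.2 ⟨h e he, F.not_isDiag_of_mem_edgeSet (F.mem_edgeFinset.1 he)⟩⟩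

theorem gnp_le_graphOf_and_card_inter_le {n : ℕ} {p t : ℝ} (hp0 : 0 ≤ p) (hp1 : p ≤ 1)
    {F : SimpleGraph (Fin n)} {B : Finset (Sym2 (Fin n))}
    (hB : ∀ e ∈ B, ¬e.IsDiag ∧ e ∉ F.edgeSet) (ht : t ≤ p * #B / 2) :
    gnp n p {ω | F ≤ graphOf ω ∧ (#(B ∩ (graphOf ω).edgeFinset) : ℝ) ≤ t}
      ≤ ENNReal.ofReal (p ^ #F.edgeFinset * exp (-(p * #B) / 8)) := by
  have hFB : Disjoint F.edgeFinset B :=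
    disjoint_right.2 fun e he => by simpa using (hB e he).2
  have hcover : {ω | F ≤ graphOf ω ∧ (#(B ∩ (graphOf ω).edgeFinset) : ℝ) ≤ t}
      ⊆ ⋃ S ∈ B.powerset.filter (fun S => (#S : ℝ) ≤ t),
          {ω | (∀ e ∈ F.edgeFinset ∪ S, ω e = true) ∧ ∀ e ∈ B \ S, ω e = false} := by
    rintro ω ⟨hFG, hcard⟩
    refine Set.mem_iUnion₂.2 ⟨B ∩ (graphOf ω).edgeFinset,
      mem_filter.2 ⟨mem_powerset.2 inter_subset_left, hcard⟩, fun e he => ?_, fun e he => ?_⟩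
    · rcases mem_union.1 he with hF | hS
      · exact le_graphOf_iff.1 hFG e hF
      · exact (mem_edgeFinset_graphOf.1 (mem_inter.1 hS).2).1
    · obtain ⟨heB, heS⟩ := mem_sdiff.1 he
      by_contra hω
      exact heS (mem_inter.2 ⟨heB, mem_edgeFinset_graphOf.2 ⟨by simpa using hω, (hB e heB).1⟩⟩)
  calc _ ≤ ∑ S ∈ B.powerset.filter (fun S => (#S : ℝ) ≤ t),
        gnp n p {ω | (∀ e ∈ F.edgeFinset ∪ S, ω e = true) ∧ ∀ e ∈ B \ S, ω e = false} :=
        (measure_mono hcover).trans (measure_biUnion_finset_le _ _)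
    _ = ∑ S ∈ B.powerset.filter (fun S => (#S : ℝ) ≤ t),
        ENNReal.ofReal (p ^ #F.edgeFinset * (p ^ #S * (1 - p) ^ (#B - #S))) := by
        refine sum_congr rfl fun S hS => ?_
        have hSB : S ⊆ B := mem_powerset.1 (mem_filter.1 hS).1
        have hdisj : Disjoint (F.edgeFinset ∪ S) (B \ S) :=
          disjoint_union_left.2 ⟨disjoint_of_subset_right sdiff_subset hFB, disjoint_sdiff⟩
        rw [gnp, pi_bernoulliBool_cylinder hp0 hp1 hdisj,
          card_union_of_disjoint (disjoint_of_subset_right hSB hFB), card_sdiff_of_subset hSB,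
          pow_add, mul_assoc]
    _ = ENNReal.ofReal (p ^ #F.edgeFinset * ∑ S ∈ B.powerset.filter (fun S => (#S : ℝ) ≤ t),
          p ^ #S * (1 - p) ^ (#B - #S)) := by
        rw [mul_sum, ENNReal.ofReal_sum_of_nonneg fun S _ => by
          have := sub_nonneg.2 hp1; positivity]
    _ ≤ _ := ENNReal.ofReal_le_ofReal <| mul_le_mul_of_nonneg_left
        (sum_powerset_filter_card_le_exp_neg B hp0 hp1 ht) (by positivity)

theorem sum_pow_card_edgeFinset_le_exp {V : Type*} [Fintype V] [DecidableEq V]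
    (𝓕 : Finset (SimpleGraph V)) {p δ : ℝ} (hp : 0 ≤ p) (hδ0 : 0 < δ) (hδ1 : δ ≤ 1)
    (h𝓕 : ∀ F ∈ 𝓕, (#F.edgeFinset : ℝ) ≤ δ * (p * Fintype.card V ^ 2)) :
    ∑ F ∈ 𝓕, p ^ #F.edgeFinset ≤ exp (2 * √δ * (p * Fintype.card V ^ 2)) := by
  have hinj : Set.InjOn (fun F : SimpleGraph V => F.edgeFinset) 𝓕 :=
    fun _ _ _ _ h => SimpleGraph.edgeFinset_inj.1 h
  have himage : 𝓕.image (fun F => F.edgeFinset) ⊆ (⊤ : SimpleGraph V).edgeFinset.powerset.filter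
      (fun S => (#S : ℝ) ≤ δ * (p * Fintype.card V ^ 2)) := by
    intro S hS
    obtain ⟨F, hF, rfl⟩ := mem_image.1 hS
    exact mem_filter.2 ⟨mem_powerset.2 (SimpleGraph.edgeFinset_mono le_top), h𝓕 F hF⟩
  have hcard : p * #(⊤ : SimpleGraph V).edgeFinset ≤ p * Fintype.card V ^ 2 := by
    rw [SimpleGraph.card_edgeFinset_top_eq_card_choose_two]
    gcongr
    exact_mod_cast Nat.choose_le_pow _ _
  rw [← sum_image (f := fun S => p ^ #S) hinj]
  exact (sum_le_sum_of_subset_of_nonneg himage fun _ _ _ => by positivity).trans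
    (sum_powerset_filter_card_pow_le_exp _ hp hδ0 hδ1 hcard)

theorem gnp_exists_few_boosters_le {n : ℕ} {α δ p : ℝ} (hα : 0 ≤ α) (hδ0 : 0 < δ) (hδ1 : δ ≤ 1)
    (h1 : 1024 * δ ≤ α ^ 2) (hp0 : 0 ≤ p) (hp1 : p ≤ 1) {𝓕 : Set (SimpleGraph (Fin n))}
    {𝓑 : SimpleGraph (Fin n) → Finset (Sym2 (Fin n))} (h𝓑 : Boosterable 𝓕 𝓑 (δ * p) α) :
    gnp n p {ω | ∃ F ∈ 𝓕, F ≤ graphOf ω ∧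
        (#(𝓑 F ∩ (graphOf ω).edgeFinset) : ℝ) ≤ α * p * n ^ 2 / 2}
      ≤ ENNReal.ofReal (exp (-(α * (p * n ^ 2)) / 16)) := by
  set N := p * (n : ℝ) ^ 2
  have hN : 0 ≤ N := by positivity
  have hsδ : √δ ≤ α / 32 := (sqrt_le_left (by positivity)).2 (by linarith)
  set 𝓕' := (Set.toFinite 𝓕).toFinset
  have hbad : ∀ F ∈ 𝓕', gnp n p {ω | F ≤ graphOf ω ∧
      (#(𝓑 F ∩ (graphOf ω).edgeFinset) : ℝ) ≤ α * p * n ^ 2 / 2}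
      ≤ ENNReal.ofReal (p ^ #F.edgeFinset * exp (-(α * N) / 8)) := by
    intro F hF
    obtain ⟨-, hB, hcard⟩ := h𝓑 F ((Set.toFinite 𝓕).mem_toFinset.1 hF)
    have hαN : α * N ≤ p * #(𝓑 F) := by nlinarith
    refine (gnp_le_graphOf_and_card_inter_le hp0 hp1 hB (by linarith)).trans ?_
    gcongr
  have hsum : ∑ F ∈ 𝓕', p ^ #F.edgeFinset ≤ exp (2 * √δ * N) := by
    refine le_of_le_of_eq
      (sum_pow_card_edgeFinset_le_exp 𝓕' hp0 hδ0 hδ1 fun F hF => ?_) (by simp [N])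
    have := (h𝓑 F ((Set.toFinite 𝓕).mem_toFinset.1 hF)).1
    simp only [Fintype.card_fin]
    linarith
  calc _ = gnp n p (⋃ F ∈ 𝓕', {ω | F ≤ graphOf ω ∧
        (#(𝓑 F ∩ (graphOf ω).edgeFinset) : ℝ) ≤ α * p * n ^ 2 / 2}) := by
        congr 1; ext ω
        simp only [Set.mem_ofPred_eq, Set.mem_iUnion, exists_prop, 𝓕', Set.Finite.mem_toFinset]
    _ ≤ ∑ F ∈ 𝓕', ENNReal.ofReal (p ^ #F.edgeFinset * exp (-(α * N) / 8)) :=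
        (measure_biUnion_finset_le _ _).trans (sum_le_sum hbad)
    _ = ENNReal.ofReal ((∑ F ∈ 𝓕', p ^ #F.edgeFinset) * exp (-(α * N) / 8)) := by
        rw [sum_mul, ENNReal.ofReal_sum_of_nonneg fun F _ => by positivity]
    _ ≤ ENNReal.ofReal (exp (2 * √δ * N) * exp (-(α * N) / 8)) := by gcongr
    _ ≤ ENNReal.ofReal (exp (-(α * N) / 16)) := by
        rw [← exp_add]
        gcongr
        nlinarith

/-- Let `1024δ ≤ α²` and `δ ≤ 1/e`. For `p ≥ 1/n` and any `(δp, α)`-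
boosterable family `(𝓕, 𝓑)`, w.h.p. every `F ∈ 𝓕` contained in `G(n,p)` satisfies
`|B_F ∩ E(G)| > αpn²/2`. -/
theorem boosters_appear (α δ : ℝ) (hα : 0 < α) (hδ : 0 < δ)
    (h1 : 1024 * δ ≤ α ^ 2) (h2 : δ ≤ 1 / Real.exp 1) :
    ∀ ε : ℝ, 0 < ε → ∃ n₀ : ℕ, ∀ n : ℕ, n₀ ≤ n → ∀ p : ℝ, 1 / (n : ℝ) ≤ p → p ≤ 1 →
    ∀ (𝓕 : Set (SimpleGraph (Fin n))) (𝓑 : SimpleGraph (Fin n) → Finset (Sym2 (Fin n))),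
    Boosterable 𝓕 𝓑 (δ * p) α →
    ENNReal.ofReal (1 - ε) ≤ gnp n p {ω | ∀ F ∈ 𝓕, F ≤ graphOf ω →
      α * p * (n : ℝ) ^ 2 / 2 < (((𝓑 F) ∩ (graphOf ω).edgeFinset).card : ℝ)} := by
  intro ε hε
  have hδ1 : δ ≤ 1 := h2.trans ((div_le_one (exp_pos 1)).2 (one_le_exp zero_le_one))
  obtain ⟨n₀, hn₀⟩ := Filter.eventually_atTop.1 <|
    (tendsto_exp_neg_atTop_nhds_zero.comp <|
      tendsto_natCast_atTop_atTop.const_mul_atTop (by positivity : 0 < α / 16)).eventually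
      (gt_mem_nhds hε)
  refine ⟨max n₀ 1, fun n hn p hnp hp1 𝓕 𝓑 h𝓑 => ?_⟩
  have hn1 : (1 : ℝ) ≤ n := by exact_mod_cast (le_max_right n₀ 1).trans hn
  have hp0 : 0 < p := (by positivity : (0 : ℝ) < 1 / n).trans_le hnp
  have hnN : (n : ℝ) ≤ p * n ^ 2 := by
    calc (n : ℝ) = 1 / n * n ^ 2 := by field_simp
      _ ≤ p * n ^ 2 := by gcongr
  have hbad := gnp_exists_few_boosters_le hα.le hδ hδ1 h1 hp0.le hp1 h𝓑
  have hexp : exp (-(α * (p * n ^ 2)) / 16) < ε :=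
    lt_of_le_of_lt (exp_le_exp.2 (by nlinarith)) (hn₀ n ((le_max_left n₀ 1).trans hn))
  rw [← compl_compl {ω | ∀ F ∈ 𝓕, _}, prob_compl_eq_one_sub (Set.to_countable _).measurableSet,
    ENNReal.ofReal_sub _ hε.le, ENNReal.ofReal_one]
  refine tsub_le_tsub_left (le_trans ?_ (hbad.trans (ENNReal.ofReal_le_ofReal hexp.le))) 1
  exact measure_mono fun ω hω => by simpa [not_lt] using hω
end

section
/- For each η, d > 0 there exist C, c > 0 such that the following holds with probability tending to 1 as n → ∞, where G = G(n,p) with p ≥ C/n: (1) every subgraph G' ⊆ G with minimum degree δ(G') ≥ ηpn is a (cn, d)-expander; and (2) every bipartite subgraph G' ⊆ G with δ(G') ≥ ηpn is a (cn, d)-bipartite-expander. -/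
open MeasureTheory
open scoped Classical

/-- The graph `H`, with vertex set `S`, is an `(m,d)`-expander: every nonempty `T ⊆ S` with
`|T| ≤ m` satisfies `|N(T)| ≥ d|T|`. -/
noncomputable def IsExpanderOn {V : Type*} [Fintype V] (H : SimpleGraph V) (S : Finset V)
    (m d : ℝ) : Prop :=
  ∀ T : Finset V, T ⊆ S → T.Nonempty → (T.card : ℝ) ≤ m →
    d * T.card ≤ ((extNbhd H T).card : ℝ)

/-- The bipartite graph `H`, with parts `V1`, `V2`, is an `(m,d)`-bipartite-expander. -/
noncomputable def IsBipExpanderOn {V : Type*} [Fintype V] (H : SimpleGraph V)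
    (V1 V2 : Finset V) (m d : ℝ) : Prop :=
  ∀ T : Finset V, (T ⊆ V1 ∨ T ⊆ V2) → T.Nonempty → (T.card : ℝ) ≤ m →
    d * T.card ≤ ((extNbhd H T).card : ℝ)

/-!
Let `β = η / (2(1 + d))`. With high probability every vertex set `U` of `G(n,p)` with
`|U| ≤ (1 + d)cn` spans at most `βpn|U|` edges: by a first-moment bound, `U` of size `u` spans
more than `βpn u ≥ 3u` edges with probability at most `(3u / (βn))^{3u}`, and
`C(n,u) (3u / (βn))^{3u} ≤ (81u² / (β³n²))^u`, which sums to `O(1/n)` once `c` is small.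

Given this sparseness, let `H ⊆ G` have minimum degree `ηpn` on `T`, `|T| ≤ cn`. If
`|N_H(T)| < d|T|`, then `U = T ∪ N_H(T)` has fewer than `(1 + d)|T|` vertices and contains every
`H`-edge at `T`, so `ηpn|T| ≤ 2e(U) ≤ 2βpn|U| < ηpn|T|`. A bipartite part is just a special `T`.
-/

open Finset
open scoped ENNReal Nat

theorem Nat.choose_mul_pow_le_pow_div (M k : ℕ) {x : ℝ} (hx : 0 ≤ x) :
    (M.choose k : ℝ) * x ^ k ≤ (3 * M * x / k) ^ k := by
  rcases k.eq_zero_or_pos with rfl | hk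
  · simp
  have hk' : (0 : ℝ) < k := by exact_mod_cast hk
  have hfact : (k : ℝ) ^ k ≤ 3 ^ k * k ! := by
    have h := Real.pow_div_factorial_le_exp (x := k) hk'.le k
    rw [div_le_iff₀ (by positivity), ← Real.exp_one_pow] at h
    refine h.trans (mul_le_mul_of_nonneg_right (pow_le_pow_left₀ (Real.exp_pos 1).le ?_ k)
      (by positivity))
    linarith [Real.exp_one_lt_d9]
  calc (M.choose k : ℝ) * x ^ k ≤ (M : ℝ) ^ k / k ! * x ^ k := by
        gcongr; exact Nat.choose_le_pow_div k M
    _ = (M * x) ^ k / k ^ k * (k ^ k / k !) := by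
        rw [mul_pow]; field_simp
    _ ≤ (M * x) ^ k / k ^ k * 3 ^ k := by
        gcongr; rwa [div_le_iff₀ (by positivity)]
    _ = (3 * M * x / k) ^ k := by rw [div_pow, mul_pow, mul_pow, mul_pow]; ring

theorem div_four_mul_pow_le {u n : ℕ} (hu : 1 ≤ u) (hun : u ≤ n) :
    ((u : ℝ) / (4 * n)) ^ u ≤ (1 / 2) ^ u / n := by
  have hn : (0 : ℝ) < n := by exact_mod_cast hu.trans hun
  have hu_le_n : (u : ℝ) / n ≤ 1 := by rw [div_le_one hn]; exact_mod_cast hun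
  have hu_le_two_pow : (u : ℝ) ≤ 2 ^ u := by exact_mod_cast (Nat.lt_two_pow_self).le
  calc ((u : ℝ) / (4 * n)) ^ u = ((u : ℝ) / n) ^ u * (1 / 4) ^ u := by
        rw [← mul_pow]; ring_nf
    _ ≤ (u : ℝ) / n * (1 / 4) ^ u := by
        gcongr; exact pow_le_of_le_one (by positivity) hu_le_n (by omega)
    _ = (u * (1 / 2) ^ u) * (1 / 2) ^ u / n := by
        rw [show (1 / 4 : ℝ) = 1 / 2 * (1 / 2) by norm_num, mul_pow]; ring
    _ ≤ 1 * (1 / 2) ^ u / n := by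
        gcongr
        rw [div_pow, one_pow, mul_one_div, div_le_one (by positivity)]
        exact hu_le_two_pow
    _ = (1 / 2) ^ u / n := by ring

theorem choose_mul_le_half_pow_div {n u : ℕ} {β : ℝ} (hβ : 0 < β) (hu : 1 ≤ u)
    (hun : 324 * u ≤ β ^ 3 * n) :
    (n.choose u : ℝ) * (3 * u / (β * n)) ^ (3 * u) ≤ (1 / 2) ^ u / n := by
  rcases le_or_gt u n with hle | hlt
  · have hu' : (0 : ℝ) < u := by exact_mod_cast hu
    have hn : (0 : ℝ) < n := by exact_mod_cast hu.trans hle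
    have hratio : 3 * n * (3 * u / (β * n)) ^ 3 / u ≤ u / (4 * n) := by
      rw [div_pow, div_le_div_iff₀ (by positivity) (by positivity)]
      field_simp
      nlinarith [mul_le_mul_of_nonneg_right hun (by positivity : (0 : ℝ) ≤ 81 * u ^ 3 * n ^ 2)]
    calc (n.choose u : ℝ) * (3 * u / (β * n)) ^ (3 * u)
        = (n.choose u : ℝ) * ((3 * u / (β * n)) ^ 3) ^ u := by rw [← pow_mul, mul_comm 3 u]
      _ ≤ (3 * n * (3 * u / (β * n)) ^ 3 / u) ^ u :=
        Nat.choose_mul_pow_le_pow_div n u (by positivity)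
      _ ≤ (u / (4 * n)) ^ u := by gcongr
      _ ≤ (1 / 2) ^ u / n := div_four_mul_pow_le hu hle
  · rw [Nat.choose_eq_zero_of_lt hlt, Nat.cast_zero, zero_mul]
    positivity

theorem Finset.card_sym2_le_card_mul_self {α : Type*} (s : Finset α) : #s.sym2 ≤ #s * #s := by
  rw [card_sym2, Nat.choose_two_right, Nat.add_sub_cancel]
  exact Nat.div_le_of_le_mul (by nlinarith)

namespace SimpleGraph

variable {V : Type*} [Fintype V] [DecidableEq V]

noncomputable def edgesWithin (G : SimpleGraph V) (U : Finset V) : Finset (Sym2 V) :=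
  G.edgeFinset ∩ U.sym2

def IsLocallySparse (G : SimpleGraph V) (m ρ : ℝ) : Prop :=
  ∀ U : Finset V, (#U : ℝ) ≤ m → (#(G.edgesWithin U) : ℝ) ≤ ρ * #U

theorem exists_card_le_floor_of_not_isLocallySparse {G : SimpleGraph V} {m ρ : ℝ}
    (h : ¬ G.IsLocallySparse m ρ) :
    ∃ U : Finset V, 1 ≤ #U ∧ #U ≤ ⌊m⌋₊ ∧ ρ * #U < #(G.edgesWithin U) := by
  simp only [IsLocallySparse, not_forall, not_le, exists_prop] at h
  obtain ⟨U, hUm, hU⟩ := h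
  refine ⟨U, card_pos.2 (nonempty_iff_ne_empty.2 ?_), Nat.le_floor hUm, hU⟩
  rintro rfl
  simp [edgesWithin] at hU

theorem edgesWithin_mono {G H : SimpleGraph V} (h : H ≤ G) (U : Finset V) :
    H.edgesWithin U ⊆ G.edgesWithin U :=
  inter_subset_inter_right (edgeFinset_subset_edgeFinset.2 h)

theorem sum_degree_le_two_mul_card_edgesWithin {H : SimpleGraph V} {T U : Finset V}
    (hTU : T ⊆ U) (hN : ∀ v ∈ T, ∀ w, H.Adj v w → w ∈ U) :
    ∑ v ∈ T, H.degree v ≤ 2 * #(H.edgesWithin U) := by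
  set H' := fromEdgeSet (H.edgesWithin U : Set (Sym2 V))
  have hdeg : ∀ v ∈ T, H.degree v = H'.degree v := by
    intro v hv
    rw [← card_neighborFinset_eq_degree, ← card_neighborFinset_eq_degree]
    congr 1
    ext w
    rw [mem_neighborFinset, mem_neighborFinset]
    simp only [H', fromEdgeSet_adj, edgesWithin, coe_inter, Set.mem_inter_iff,
      mem_coe, mem_edgeFinset, mem_edgeSet, mk_mem_sym2_iff]
    exact ⟨fun h => ⟨⟨h, hTU hv, hN v hv w h⟩, h.ne⟩, fun h => h.1.1⟩
  have hedges : H'.edgeFinset = H.edgesWithin U := by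
    ext e
    simp only [H', mem_edgeFinset, edgeSet_fromEdgeSet, Set.mem_sdiff, mem_coe]
    refine ⟨And.left, fun he => ⟨he, ?_⟩⟩
    exact H.not_isDiag_of_mem_edgeSet (mem_edgeFinset.1 (mem_inter.1 he).1)
  calc ∑ v ∈ T, H.degree v = ∑ v ∈ T, H'.degree v := sum_congr rfl hdeg
    _ ≤ ∑ v, H'.degree v := sum_le_univ_sum_of_nonneg fun _ => Nat.zero_le _
    _ = 2 * #(H.edgesWithin U) := by rw [sum_degrees_eq_twice_card_edges]; congr 2; convert hedges

theorem le_card_extNbhd_of_isLocallySparse {G H : SimpleGraph V} {T : Finset V} {m d ρ : ℝ}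
    (hd : 0 ≤ d) (hρ : 0 < ρ) (hG : G.IsLocallySparse ((1 + d) * m) ρ) (hHG : H ≤ G)
    (hT : (#T : ℝ) ≤ m) (hdeg : ∀ v ∈ T, 2 * (1 + d) * ρ ≤ H.degree v) :
    d * #T ≤ #(extNbhd H T) := by
  by_contra! hsmall
  set U := T ∪ extNbhd H T
  have hU : (#U : ℝ) < (1 + d) * #T := by
    have : (#U : ℝ) ≤ #T + #(extNbhd H T) := by exact_mod_cast card_union_le _ _
    linarith
  have hclosed : ∀ v ∈ T, ∀ w, H.Adj v w → w ∈ U := by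
    intro v hv w hvw
    by_cases hw : w ∈ T
    · exact mem_union_left _ hw
    · exact mem_union_right _ (by simpa [extNbhd] using ⟨hw, v, hv, hvw⟩)
  have hsum : (∑ v ∈ T, H.degree v : ℝ) ≤ 2 * #(G.edgesWithin U) := by
    have := (sum_degree_le_two_mul_card_edgesWithin subset_union_left hclosed).trans
      (Nat.mul_le_mul_left 2 (card_le_card (edgesWithin_mono hHG U)))
    exact_mod_cast this
  have hsparse : (#(G.edgesWithin U) : ℝ) ≤ ρ * #U := hG U (hU.le.trans (by gcongr))
  refine lt_irrefl (2 * (1 + d) * ρ * #T) ?_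
  calc 2 * (1 + d) * ρ * #T = #T • (2 * (1 + d) * ρ) := by rw [nsmul_eq_mul, mul_comm]
    _ ≤ ∑ v ∈ T, (H.degree v : ℝ) := card_nsmul_le_sum T _ _ hdeg
    _ ≤ 2 * (ρ * #U) := by linarith
    _ < 2 * (ρ * ((1 + d) * #T)) := by gcongr
    _ = 2 * (1 + d) * ρ * #T := by ring

theorem IsLocallySparse.isExpanderOn {G H : SimpleGraph V} {S : Finset V} {m d ρ : ℝ}
    (hG : G.IsLocallySparse ((1 + d) * m) ρ) (hd : 0 ≤ d) (hρ : 0 < ρ) (hHG : H ≤ G)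
    (hdeg : ∀ v ∈ S, 2 * (1 + d) * ρ ≤ H.degree v) : IsExpanderOn H S m d :=
  fun _ hTS _ hT => le_card_extNbhd_of_isLocallySparse hd hρ hG hHG hT fun v hv => hdeg v (hTS hv)

theorem IsLocallySparse.isBipExpanderOn {G H : SimpleGraph V} {V₁ V₂ : Finset V} {m d ρ : ℝ}
    (hG : G.IsLocallySparse ((1 + d) * m) ρ) (hd : 0 ≤ d) (hρ : 0 < ρ) (hHG : H ≤ G)
    (hdeg : ∀ v ∈ V₁ ∪ V₂, 2 * (1 + d) * ρ ≤ H.degree v) : IsBipExpanderOn H V₁ V₂ m d :=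
  fun T hT hne hTm => hG.isExpanderOn hd hρ hHG hdeg T
    (hT.elim (·.trans subset_union_left) (·.trans subset_union_right)) hne hTm

end SimpleGraph

theorem measure_biUnion_powersetCard_le {α Ω : Type*} [Fintype α] [MeasurableSpace Ω]
    (μ : Measure Ω) (A : Finset α → Set Ω) (s : Finset ℕ) (f : ℕ → ℝ≥0∞)
    (hA : ∀ u ∈ s, ∀ U : Finset α, #U = u → μ (A U) ≤ f u) :
    μ (⋃ u ∈ s, ⋃ U ∈ powersetCard u univ, A U) ≤ ∑ u ∈ s, (Fintype.card α).choose u * f u := by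
  refine (measure_biUnion_finset_le _ _).trans (sum_le_sum fun u hu => ?_)
  calc μ (⋃ U ∈ powersetCard u univ, A U) ≤ ∑ U ∈ powersetCard u univ, μ (A U) :=
        measure_biUnion_finset_le _ _
    _ ≤ ∑ U ∈ powersetCard u (univ : Finset α), f u :=
        sum_le_sum fun U hU => hA u hu U (mem_powersetCard.1 hU).2
    _ = (Fintype.card α).choose u * f u := by
        rw [sum_const, card_powersetCard, card_univ, nsmul_eq_mul]

instance (n : ℕ) (p : ℝ) : IsProbabilityMeasure (gnp n p) := by
  unfold gnp; infer_instance

theorem bernoulliBool_singleton_true {p : ℝ} (hp : p ≤ 1) :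
    bernoulliBool p {true} = ENNReal.ofReal p := by
  rw [bernoulliBool, PMF.toMeasure_apply_singleton _ _ (measurableSet_singleton _)]
  simp [PMF.bernoulli_apply, ENNReal.ofReal, min_eq_left (Real.toNNReal_le_one.2 hp)]

theorem gnp_forall_mem_eq_true {n : ℕ} {p : ℝ} (hp : p ≤ 1) (E : Finset (Sym2 (Fin n))) :
    gnp n p {ω | ∀ e ∈ E, ω e = true} = ENNReal.ofReal p ^ #E := by
  have hcyl : {ω : Sym2 (Fin n) → Bool | ∀ e ∈ E, ω e = true} =
      Set.univ.pi fun e => if e ∈ E then {true} else Set.univ := by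
    ext ω
    simp only [Set.mem_ofPred_eq, Set.mem_pi, Set.mem_univ, true_imp_iff]
    exact forall_congr' fun e => by split_ifs with he <;> simp [he]
  have hfactor : ∀ e, bernoulliBool p (if e ∈ E then {true} else Set.univ) =
      if e ∈ E then ENNReal.ofReal p else 1 := by
    intro e
    split_ifs
    exacts [bernoulliBool_singleton_true hp, measure_univ]
  rw [hcyl, gnp, Measure.pi_pi, Finset.prod_congr rfl fun e _ => hfactor e, prod_ite_mem,
    univ_inter, prod_const]

theorem gnp_le_card_filter_le {n : ℕ} {p : ℝ} (hp : p ≤ 1) (P : Finset (Sym2 (Fin n)))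
    (k : ℕ) :
    gnp n p {ω | k ≤ #(P.filter (ω · = true))} ≤ (#P).choose k * ENNReal.ofReal p ^ k := by
  have hcover : {ω : Sym2 (Fin n) → Bool | k ≤ #(P.filter (ω · = true))} ⊆
      ⋃ E ∈ P.powersetCard k, {ω | ∀ e ∈ E, ω e = true} := by
    intro ω hω
    obtain ⟨E, hE, rfl⟩ := exists_subset_card_eq hω
    exact Set.mem_biUnion (mem_powersetCard.2 ⟨hE.trans (filter_subset _ _), rfl⟩)
      fun e he => (mem_filter.1 (hE he)).2
  calc gnp n p {ω | k ≤ #(P.filter (ω · = true))}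
      ≤ ∑ E ∈ P.powersetCard k, gnp n p {ω | ∀ e ∈ E, ω e = true} :=
        (measure_mono hcover).trans (measure_biUnion_finset_le _ _)
    _ = (#P).choose k * ENNReal.ofReal p ^ k := by
        rw [sum_congr rfl fun E hE => by rw [gnp_forall_mem_eq_true hp, (mem_powersetCard.1 hE).2],
          sum_const, card_powersetCard, nsmul_eq_mul]

theorem edgesWithin_graphOf_subset {n : ℕ} (ω : Sym2 (Fin n) → Bool) (U : Finset (Fin n)) :
    (graphOf ω).edgesWithin U ⊆ U.sym2.filter (ω · = true) := by
  intro e he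
  obtain ⟨he, heU⟩ := mem_inter.1 he
  rw [SimpleGraph.mem_edgeFinset, graphOf, SimpleGraph.edgeSet_fromEdgeSet] at he
  exact mem_filter.2 ⟨heU, he.1⟩

theorem gnp_lt_card_edgesWithin_le {n : ℕ} {p ρ : ℝ} (hp0 : 0 < p) (hp1 : p ≤ 1) (hρ : 3 ≤ ρ)
    {U : Finset (Fin n)} (hU : 3 * #U * p ≤ ρ) :
    gnp n p {ω | ρ * #U < #((graphOf ω).edgesWithin U)} ≤
      ENNReal.ofReal ((3 * #U * p / ρ) ^ (3 * #U)) := by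
  set u := #U
  set M := #U.sym2
  set k := ⌊ρ * u⌋₊ + 1
  have hk : ρ * u < k := by simpa [k] using Nat.lt_floor_add_one (ρ * u)
  have hM : (M : ℝ) ≤ u * u := by exact_mod_cast card_sym2_le_card_mul_self U
  have h3u : 3 * u ≤ k := by
    have : (3 * u : ℝ) < k := (by gcongr : (3 : ℝ) * u ≤ ρ * u).trans_lt hk
    exact_mod_cast this.le
  have hcover : {ω | ρ * u < #((graphOf ω).edgesWithin U)} ⊆
      {ω | k ≤ #(U.sym2.filter (ω · = true))} := by
    intro ω hω
    have := (Nat.floor_lt (by positivity : 0 ≤ ρ * u)).2 hω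
    exact Nat.succ_le_of_lt (this.trans_le (card_le_card (edgesWithin_graphOf_subset ω U)))
  have hbase : 3 * M * p / k ≤ 3 * u * p / ρ := by
    rw [div_le_div_iff₀ (by positivity) (by positivity)]
    calc 3 * M * p * ρ ≤ 3 * (u * u) * p * ρ := by gcongr
      _ = 3 * u * p * (ρ * u) := by ring
      _ ≤ 3 * u * p * k := by gcongr
  calc gnp n p {ω | ρ * u < #((graphOf ω).edgesWithin U)}
      ≤ M.choose k * ENNReal.ofReal p ^ k :=
        (measure_mono hcover).trans (gnp_le_card_filter_le hp1 _ k)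
    _ = ENNReal.ofReal (M.choose k * p ^ k) := by
        rw [ENNReal.ofReal_mul (by positivity), ENNReal.ofReal_pow hp0.le, ENNReal.ofReal_natCast]
    _ ≤ ENNReal.ofReal ((3 * u * p / ρ) ^ (3 * u)) := by
        refine ENNReal.ofReal_le_ofReal ((Nat.choose_mul_pow_le_pow_div M k hp0.le).trans ?_)
        calc (3 * M * p / k) ^ k ≤ (3 * u * p / ρ) ^ k := by gcongr
          _ ≤ (3 * u * p / ρ) ^ (3 * u) :=
            pow_le_pow_of_le_one (by positivity) ((div_le_one (by positivity)).2 hU) h3u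

theorem gnp_not_isLocallySparse_le {n : ℕ} {p β m : ℝ} (hp0 : 0 < p) (hp1 : p ≤ 1) (hβ : 0 < β)
    (hpn : 3 ≤ β * p * n) (hm : 3 * m ≤ β * n) (hm' : 324 * m ≤ β ^ 3 * n) :
    gnp n p {ω | ¬ (graphOf ω).IsLocallySparse m (β * p * n)} ≤ ENNReal.ofReal (2 / n) := by
  have hn : (0 : ℝ) < n := pos_of_mul_pos_right (by linarith) (by positivity : 0 ≤ β * p)
  set D := ⌊m⌋₊
  have hcover : {ω | ¬ (graphOf ω).IsLocallySparse m (β * p * n)} ⊆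
      ⋃ u ∈ Icc 1 D, ⋃ U ∈ powersetCard u (univ : Finset (Fin n)),
        {ω | β * p * n * #U < #((graphOf ω).edgesWithin U)} := by
    intro ω hω
    obtain ⟨U, hU1, hUD, hU⟩ := SimpleGraph.exists_card_le_floor_of_not_isLocallySparse hω
    simp only [Set.mem_iUnion, exists_prop]
    exact ⟨#U, mem_Icc.2 ⟨hU1, hUD⟩, U, mem_powersetCard.2 ⟨subset_univ U, rfl⟩, hU⟩
  have hum : ∀ u ∈ Icc 1 D, (u : ℝ) ≤ m := fun u hu =>
    (Nat.le_floor_iff' (by have := (mem_Icc.1 hu).1; omega)).1 (mem_Icc.1 hu).2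
  refine (measure_mono hcover).trans ((measure_biUnion_powersetCard_le _ _ _
    (fun u => ENNReal.ofReal ((3 * u / (β * n)) ^ (3 * u))) fun u hu U hU => ?_).trans ?_)
  · have := hum u hu
    subst hU
    convert gnp_lt_card_edgesWithin_le hp0 hp1 hpn (by nlinarith) using 3
    field_simp
  have hterm : ∀ u ∈ Icc 1 D,
      (n.choose u : ℝ) * (3 * u / (β * n)) ^ (3 * u) ≤ (1 / 2) ^ u / n := fun u hu =>
    choose_mul_le_half_pow_div hβ (mem_Icc.1 hu).1 (by nlinarith [hum u hu])
  have hgeom : ∑ u ∈ Icc 1 D, (1 / 2 : ℝ) ^ u ≤ 2 :=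
    (sum_le_sum_of_subset_of_nonneg (fun u hu => mem_range.2 (Nat.lt_succ_of_le (mem_Icc.1 hu).2))
      fun _ _ _ => by positivity).trans (sum_geometric_two_le (D + 1))
  calc ∑ u ∈ Icc 1 D, ((Fintype.card (Fin n)).choose u : ℝ≥0∞) *
        ENNReal.ofReal ((3 * u / (β * n)) ^ (3 * u))
      = ENNReal.ofReal (∑ u ∈ Icc 1 D, (n.choose u : ℝ) * (3 * u / (β * n)) ^ (3 * u)) := by
        rw [ENNReal.ofReal_sum_of_nonneg fun _ _ => by positivity, Fintype.card_fin]
        refine sum_congr rfl fun u _ => ?_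
        rw [ENNReal.ofReal_mul (by positivity), ENNReal.ofReal_natCast]
    _ ≤ ENNReal.ofReal (2 / n) := by
        refine ENNReal.ofReal_le_ofReal ((sum_le_sum hterm).trans ?_)
        rw [← sum_div]
        gcongr

theorem one_sub_le_gnp_isLocallySparse {n : ℕ} {p β m : ℝ} (hp0 : 0 < p) (hp1 : p ≤ 1)
    (hβ : 0 < β) (hpn : 3 ≤ β * p * n) (hm : 3 * m ≤ β * n) (hm' : 324 * m ≤ β ^ 3 * n) :
    ENNReal.ofReal (1 - 2 / n) ≤ gnp n p {ω | (graphOf ω).IsLocallySparse m (β * p * n)} := by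
  rw [ENNReal.ofReal_sub _ (by positivity), ENNReal.ofReal_one]
  calc 1 - ENNReal.ofReal (2 / n)
      ≤ 1 - gnp n p {ω | ¬ (graphOf ω).IsLocallySparse m (β * p * n)} :=
        tsub_le_tsub_left (gnp_not_isLocallySparse_le hp0 hp1 hβ hpn hm hm') 1
    _ = gnp n p {ω | (graphOf ω).IsLocallySparse m (β * p * n)} := by
        rw [← prob_compl_eq_one_sub (Set.toFinite _).measurableSet, Set.compl_ofPred]
        simp only [not_not]

/-- Expansion from minimum degree. For all `η, d > 0` there are
`C, c > 0` such that w.h.p. for `G = G(n,p)` with `p ≥ C/n`: every subgraph of `G` with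
minimum degree at least `ηpn` is a `(cn,d)`-expander, and every bipartite subgraph of `G`
with minimum degree at least `ηpn` is a `(cn,d)`-bipartite-expander. -/
theorem expansion_from_min_degree (η d : ℝ) (hη : 0 < η) (hd : 0 < d) :
    ∃ C c : ℝ, 0 < C ∧ 0 < c ∧
    ∀ ε : ℝ, 0 < ε → ∃ n₀ : ℕ, ∀ n : ℕ, n₀ ≤ n → ∀ p : ℝ, C / n ≤ p → p ≤ 1 →
    ENNReal.ofReal (1 - ε) ≤ gnp n p {ω |
      (∀ (H : SimpleGraph (Fin n)) (S : Finset (Fin n)),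
        H ≤ graphOf ω →
        (∀ u v, H.Adj u v → u ∈ S ∧ v ∈ S) →
        (∀ v ∈ S, η * p * n ≤ (H.degree v : ℝ)) →
        IsExpanderOn H S (c * n) d) ∧
      (∀ (H : SimpleGraph (Fin n)) (V1 V2 : Finset (Fin n)),
        H ≤ graphOf ω →
        Disjoint V1 V2 →
        (∀ u v, H.Adj u v → (u ∈ V1 ∧ v ∈ V2) ∨ (u ∈ V2 ∧ v ∈ V1)) →
        (∀ v ∈ V1 ∪ V2, η * p * n ≤ (H.degree v : ℝ)) →
        IsBipExpanderOn H V1 V2 (c * n) d)} := by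
  set β := η / (2 * (1 + d))
  have hβ : 0 < β := by positivity
  set c := min (β / 3) (β ^ 3 / 324) / (1 + d)
  refine ⟨3 / β, c, by positivity, by positivity, fun ε hε => ⟨⌈2 / ε⌉₊, ?_⟩⟩
  intro n hn p hpC hp1
  have hεn : 2 / ε ≤ n := (Nat.le_ceil _).trans (by exact_mod_cast hn)
  have hn0 : (0 : ℝ) < n := lt_of_lt_of_le (by positivity) hεn
  have hp0 : 0 < p := lt_of_lt_of_le (by positivity) hpC
  have hpn : 3 ≤ β * p * n := by
    rw [div_div, div_le_iff₀ (by positivity)] at hpC; linarith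
  have hm : (1 + d) * (c * n) = min (β / 3) (β ^ 3 / 324) * n := by
    simp only [c]; field_simp
  have hdeg : 2 * (1 + d) * (β * p * n) = η * p * n := by simp only [β]; field_simp
  calc ENNReal.ofReal (1 - ε) ≤ ENNReal.ofReal (1 - 2 / n) := by
        refine ENNReal.ofReal_le_ofReal (sub_le_sub_left ?_ 1)
        rwa [div_le_iff₀ hn0, mul_comm, ← div_le_iff₀ hε]
    _ ≤ gnp n p {ω | (graphOf ω).IsLocallySparse ((1 + d) * (c * n)) (β * p * n)} :=
        one_sub_le_gnp_isLocallySparse hp0 hp1 hβ hpn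
          (by rw [hm]; nlinarith [min_le_left (β / 3) (β ^ 3 / 324)])
          (by rw [hm]; nlinarith [min_le_right (β / 3) (β ^ 3 / 324)])
    _ ≤ _ := by
      refine measure_mono fun ω hω => ⟨fun H S hH _ hS => ?_, fun H V₁ V₂ hH _ _ hV => ?_⟩
      · exact hω.isExpanderOn hd.le (by positivity) hH (hdeg ▸ hS)
      · exact hω.isBipExpanderOn hd.le (by positivity) hH (hdeg ▸ hV)
end

section
/- Let n, m, d ∈ ℕ satisfy n ≥ 6dm and d ≥ 7, and suppose n is odd. Let G be a bipartite graph with parts V₁ and V₂ such that |V₁|, |V₂| ≥ 3n/2, and suppose G is an (m,d)-bipartite-expander and m-bipartite-joined. Then for every s₁ ∈ V₁ and s₂ ∈ V₂, there exists a path in G from s₁ to s₂ of length n − 2 (that is, a path with n − 1 vertices). -/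
open scoped Classical

/-- `G` is a bipartite graph with parts `V1`, `V2`: they partition the vertex set and every
edge goes between them. -/
def IsBipartiteIn {V : Type*} [Fintype V] (G : SimpleGraph V) (V1 V2 : Finset V) : Prop :=
  Disjoint V1 V2 ∧ V1 ∪ V2 = Finset.univ ∧
  ∀ u v, G.Adj u v → (u ∈ V1 ∧ v ∈ V2) ∨ (u ∈ V2 ∧ v ∈ V1)

/-- `G` (with parts `V1`,`V2`) is an `(m,d)`-bipartite-expander: every nonempty subset `S` of
one of the parts with `|S| ≤ m` satisfies `|N(S)| ≥ d|S|`. -/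
def IsBipExpander {V : Type*} [Fintype V] (G : SimpleGraph V) (V1 V2 : Finset V)
    (m d : ℝ) : Prop :=
  ∀ S : Finset V, (S ⊆ V1 ∨ S ⊆ V2) → S.Nonempty → (S.card : ℝ) ≤ m →
    d * S.card ≤ ((extNbhd G S).card : ℝ)

/-- `G` (with parts `V1`,`V2`) is `m`-bipartite-joined: any `A ⊆ V1` and `B ⊆ V2` of size `m`
each have an edge between them. -/
def IsBipJoined {V : Type*} (G : SimpleGraph V) (V1 V2 : Finset V) (m : ℕ) : Prop :=
  ∀ A ⊆ V1, ∀ B ⊆ V2, A.card = m → B.card = m → ∃ a ∈ A, ∃ b ∈ B, G.Adj a b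

/-!
From `s₁` and `s₂` grow, in lockstep, two disjoint webs: levels of sizes `min m 2^i`, each
vertex adjacent to the previous level, so that every vertex of level `i` ends a path of length
`i` from the root inside its web. Since `d ≥ 7`, the neighbourhood of the current level still
has room for the next one after removing everything built so far. Stopping at depths `t₁` even
and `t₂` odd, the last levels `X`, `Y` have size `m` and lie in `V₁`.

Outside the webs (at most `8m` vertices) depth-first search, combined with `m`-joinedness,
finds a path `Q` of length about `3n - 20m`. Fewer than `m` vertices of `V₂` miss `X`, and
fewer than `m` miss `Y`, so among `2m - 1` pairs of `V₂`-vertices of `Q` at distance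
`D = n - 4 - t₁ - t₂` some pair is joined to `X` and to `Y`: go from `s₁` to `X`, along `Q`,
and from `Y` back to `s₂`.
-/

open Finset SimpleGraph

namespace IsBipartiteIn

variable {V : Type*} [Fintype V] {G : SimpleGraph V} {V1 V2 : Finset V}

theorem mem_right_iff (hbip : IsBipartiteIn G V1 V2) {v : V} : v ∈ V2 ↔ v ∉ V1 := by
  have hv : v ∈ V1 ∪ V2 := hbip.2.1 ▸ mem_univ v
  exact ⟨fun h2 h1 ↦ disjoint_left.1 hbip.1 h1 h2, (mem_union.1 hv).resolve_left⟩

theorem mem_left_iff_of_adj (hbip : IsBipartiteIn G V1 V2) {u v : V} (h : G.Adj u v) :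
    v ∈ V1 ↔ u ∉ V1 := by
  have := hbip.2.2 u v h
  grind [hbip.mem_right_iff]

theorem even_length_iff (hbip : IsBipartiteIn G V1 V2) {u v : V} (p : G.Walk u v) :
    Even p.length ↔ (u ∈ V1 ↔ v ∈ V1) := by
  let c : G.Coloring Bool := Coloring.mk (fun v ↦ decide (v ∈ V1)) fun h ↦ by
    simp [hbip.mem_left_iff_of_adj h]
  simpa [c, Coloring.mk] using c.even_length_iff_congr p

theorem even_iff_getVert (hbip : IsBipartiteIn G V1 V2) {u v : V} (p : G.Walk u v) {i : ℕ}
    (hi : i ≤ p.length) : Even i ↔ (u ∈ V1 ↔ p.getVert i ∈ V1) := by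
  simpa [Walk.take_length, hi] using hbip.even_length_iff (p.take i)

theorem isIndepSet_left (hbip : IsBipartiteIn G V1 V2) : G.IsIndepSet (V1 : Set V) :=
  fun _ hu _ hv _ h ↦ (hbip.mem_left_iff_of_adj h).1 hv hu

theorem isIndepSet_right (hbip : IsBipartiteIn G V1 V2) : G.IsIndepSet (V2 : Set V) :=
  fun _ hu _ hv _ h ↦ hbip.mem_right_iff.1 (mem_coe.1 hv)
    ((hbip.mem_left_iff_of_adj h).2 (hbip.mem_right_iff.1 (mem_coe.1 hu)))

end IsBipartiteIn

namespace IsBipJoined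

variable {V : Type*} {G : SimpleGraph V} {V1 V2 : Finset V} {m : ℕ}

theorem one_le (hj : IsBipJoined G V1 V2 m) : 1 ≤ m := by
  by_contra! h
  obtain ⟨a, ha, -⟩ := hj ∅ (empty_subset _) ∅ (empty_subset _) (by simp; omega) (by simp; omega)
  simp at ha

theorem card_lt_or_card_lt (hj : IsBipJoined G V1 V2 m) {A B : Finset V} (hA : A ⊆ V1)
    (hB : B ⊆ V2) (h : ∀ a ∈ A, ∀ b ∈ B, ¬G.Adj a b) : #A < m ∨ #B < m := by
  by_contra! hAB
  obtain ⟨A', hA', hA'm⟩ := exists_subset_card_eq hAB.1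
  obtain ⟨B', hB', hB'm⟩ := exists_subset_card_eq hAB.2
  obtain ⟨a, ha, b, hb, hab⟩ := hj A' (hA'.trans hA) B' (hB'.trans hB) hA'm hB'm
  exact h a (hA' ha) b (hB' hb) hab

theorem card_lt_of_forall_not_adj (hj : IsBipJoined G V1 V2 m) {X B : Finset V} (hX : X ⊆ V1)
    (hB : B ⊆ V2) (hXm : m ≤ #X) (h : ∀ x ∈ X, ∀ b ∈ B, ¬G.Adj x b) : #B < m :=
  (hj.card_lt_or_card_lt hX hB h).resolve_left (by omega)

theorem card_inter_lt_or_of_forall_not_adj (hj : IsBipJoined G V1 V2 m) {F U : Finset V}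
    (h : ∀ x ∈ F, ∀ y ∈ U, ¬G.Adj x y) (hU : m ≤ #(U ∩ V1) ∨ m ≤ #(U ∩ V2)) :
    #(F ∩ V1) < m ∨ #(F ∩ V2) < m := by
  rcases hU with hU | hU
  · refine .inr (hj.card_lt_of_forall_not_adj inter_subset_right inter_subset_right hU ?_)
    exact fun y hy x hx hyx ↦ h x (mem_inter.1 hx).1 y (mem_inter.1 hy).1 hyx.symm
  · refine .inl ((hj.card_lt_or_card_lt (B := U ∩ V2) inter_subset_right inter_subset_right
      ?_).resolve_right (by omega))
    exact fun x hx y hy ↦ h x (mem_inter.1 hx).1 y (mem_inter.1 hy).1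

end IsBipJoined

theorem IsBipExpander.le_card_extNbhd {V : Type*} [Fintype V] {G : SimpleGraph V}
    {V1 V2 : Finset V} {m d : ℕ} (hexp : IsBipExpander G V1 V2 m d) {S : Finset V}
    (hS : S ⊆ V1 ∨ S ⊆ V2) (hne : S.Nonempty) (hSm : #S ≤ m) : d * #S ≤ #(extNbhd G S) := by
  exact_mod_cast hexp S hS hne (by exact_mod_cast hSm)

namespace SimpleGraph.Walk

variable {V : Type*} {G : SimpleGraph V}

theorem two_mul_card_support_inter_le {s : Finset V} (hs : G.IsIndepSet (s : Set V))
    {u v : V} (p : G.Walk u v) :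
    2 * #(p.support.toFinset ∩ s) ≤ p.length + 1 + if u ∈ s then 1 else 0 := by
  induction p with
  | nil => split_ifs <;> simp [*]
  | @cons u x _ h q ih =>
    rw [support_cons, List.toFinset_cons, length_cons]
    by_cases hu : u ∈ s
    · have hx : x ∉ s := fun hx ↦ hs hu hx h.ne h
      have := card_insert_le u (q.support.toFinset ∩ s)
      rw [insert_inter_of_mem hu]
      simp only [hu, hx, if_true, if_false] at ih ⊢
      omega
    · rw [insert_inter_of_notMem hu]
      split_ifs at ih <;> simp only [hu, if_false] <;> omega

theorem IsPath.append_cons {u x y v : V} {p : G.Walk u x} {q : G.Walk y v} (hp : p.IsPath)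
    (hq : q.IsPath) (h : G.Adj x y) (hpq : p.support.Disjoint q.support) :
    (p.append (cons h q)).IsPath := by
  rw [isPath_def, support_append, support_cons, List.tail_cons]
  exact hp.support_nodup.append hq.support_nodup hpq

theorem IsPath.exists_subpath {u v : V} {Q : G.Walk u v} (hQ : Q.IsPath) {i D : ℕ}
    (hiD : i + D ≤ Q.length) :
    ∃ q : G.Walk (Q.getVert i) (Q.getVert (i + D)), q.IsPath ∧ q.length = D ∧
      ∀ w ∈ q.support, w ∈ Q.support := by
  refine ⟨((Q.drop i).take D).copy rfl (Q.drop_getVert i D), ?_, ?_, ?_⟩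
  · simpa using (hQ.drop i).take D
  · simp [take_length, drop_length]; omega
  · intro w hw
    simp only [support_copy, support_take, drop_support_eq_support_drop_min] at hw
    exact List.mem_of_mem_drop (List.mem_of_mem_take hw)

end SimpleGraph.Walk

section Webs

variable {V : Type*} {G : SimpleGraph V} {V1 V2 : Finset V}

def HasPathsWithin (G : SimpleGraph V) (s : V) (W X : Finset V) (t : ℕ) : Prop :=
  ∀ x ∈ X, ∃ w : G.Walk s x, w.IsPath ∧ w.length = t ∧ ∀ v ∈ w.support, v ∈ W

structure IsWeb (G : SimpleGraph V) (s : V) (A : ℕ → Finset V) (t : ℕ) : Prop where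
  zero : A 0 = {s}
  exists_adj : ∀ i < t, ∀ v ∈ A (i + 1), ∃ u ∈ A i, G.Adj u v
  disjoint : ∀ i < t, Disjoint (A (i + 1)) ((range (i + 1)).biUnion A)

namespace IsWeb

variable {s : V} {A : ℕ → Finset V} {t : ℕ}

theorem exists_path (hA : IsWeb G s A t) {i : ℕ} (hi : i ≤ t) {x : V} (hx : x ∈ A i) :
    ∃ w : G.Walk s x, w.IsPath ∧ w.length = i ∧
      ∀ v ∈ w.support, v ∈ (range (i + 1)).biUnion A := by
  induction i generalizing x with
  | zero =>
    rw [hA.zero, mem_singleton] at hx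
    subst hx
    exact ⟨.nil, .nil, rfl, by simp [hA.zero]⟩
  | succ i ih =>
    obtain ⟨u, hu, hux⟩ := hA.exists_adj i hi x hx
    obtain ⟨w, hw, hwlen, hwA⟩ := ih (by omega) hu
    have hxw : x ∉ w.support := fun h ↦ disjoint_left.1 (hA.disjoint i hi) hx (hwA x h)
    refine ⟨w.concat hux, hw.concat hxw hux, by simp [hwlen], fun v hv ↦ ?_⟩
    rw [Walk.support_concat, List.mem_append, List.mem_singleton] at hv
    rw [range_add_one, biUnion_insert]
    rcases hv with hv | rfl
    · exact mem_union_right _ (hwA v hv)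
    · exact mem_union_left _ hx

theorem hasPathsWithin (hA : IsWeb G s A t) {i : ℕ} (hi : i ≤ t) :
    HasPathsWithin G s ((range (t + 1)).biUnion A) (A i) i := fun x hx ↦ by
  obtain ⟨w, hw, hlen, hwA⟩ := hA.exists_path hi hx
  exact ⟨w, hw, hlen, fun v hv ↦ biUnion_subset_biUnion_of_subset_left A
    (range_subset_range.2 (by omega)) (hwA v hv)⟩

theorem even_iff [Fintype V] (hbip : IsBipartiteIn G V1 V2) (hA : IsWeb G s A t) {i : ℕ}
    (hi : i ≤ t) {v : V} (hv : v ∈ A i) : Even i ↔ (s ∈ V1 ↔ v ∈ V1) := by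
  obtain ⟨w, -, hw, -⟩ := hA.exists_path hi hv
  exact hw ▸ hbip.even_length_iff w

theorem subset_or_subset [Fintype V] (hbip : IsBipartiteIn G V1 V2) (hA : IsWeb G s A t) {i : ℕ}
    (hi : i ≤ t) : A i ⊆ V1 ∨ A i ⊆ V2 := by
  by_cases h : Even i ↔ s ∈ V1
  · exact .inl fun v hv ↦ by have := hA.even_iff hbip hi hv; tauto
  · exact .inr fun v hv ↦ hbip.mem_right_iff.2 (by have := hA.even_iff hbip hi hv; tauto)

theorem disjoint_level [Fintype V] (hbip : IsBipartiteIn G V1 V2) {s' : V} {B : ℕ → Finset V}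
    (hA : IsWeb G s A t) (hB : IsWeb G s' B t) (hs : s ∈ V1) (hs' : s' ∈ V2) {i : ℕ}
    (hi : i ≤ t) : Disjoint (A i) (B i) := by
  refine disjoint_left.2 fun v hvA hvB ↦ ?_
  have := hA.even_iff hbip hi hvA
  have := hB.even_iff hbip hi hvB
  have := hbip.mem_right_iff.1 hs'
  tauto

theorem update (hA : IsWeb G s A t) {N : Finset V} (hN : ∀ v ∈ N, ∃ u ∈ A t, G.Adj u v)
    (hNA : Disjoint N ((range (t + 1)).biUnion A)) :
    IsWeb G s (Function.update A (t + 1) N) (t + 1) := by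
  have hlow : ∀ i ≤ t, Function.update A (t + 1) N i = A i := fun i hi ↦
    Function.update_of_ne (by omega) _ _
  have hW : ∀ i ≤ t, (range (i + 1)).biUnion (Function.update A (t + 1) N) =
      (range (i + 1)).biUnion A := fun i hi ↦
    biUnion_congr rfl fun j hj ↦ hlow j (by simp at hj; omega)
  refine ⟨by rw [hlow 0 (by omega), hA.zero], fun i hi ↦ ?_, fun i hi ↦ ?_⟩
  · rcases (Nat.lt_succ_iff.1 hi).lt_or_eq with hi | rfl
    · rw [hlow i hi.le, hlow (i + 1) hi]; exact hA.exists_adj i hi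
    · simpa [hlow i le_rfl] using hN
  · rw [hW i (by omega)]
    rcases (Nat.lt_succ_iff.1 hi).lt_or_eq with hi | rfl
    · rw [hlow (i + 1) hi]; exact hA.disjoint i hi
    · simpa using hNA

end IsWeb

theorem card_biUnion_range_le {A : ℕ → Finset V} {a : ℕ → ℕ} {t : ℕ}
    (hA : ∀ i ≤ t, #(A i) = a i) : #((range (t + 1)).biUnion A) ≤ ∑ i ∈ range (t + 1), a i :=
  card_biUnion_le.trans_eq (sum_congr rfl fun i hi ↦ hA i (by simp at hi; omega))

theorem biUnion_range_update (A : ℕ → Finset V) (N : Finset V) (t : ℕ) :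
    (range (t + 2)).biUnion (Function.update A (t + 1) N) = N ∪ (range (t + 1)).biUnion A := by
  rw [range_add_one, biUnion_insert, Function.update_self]
  congr 1
  exact biUnion_congr rfl fun j hj ↦ Function.update_of_ne (by simp at hj; omega) _ _

end Webs

section WebPairs

variable {V : Type*} [Fintype V] {G : SimpleGraph V} {V1 V2 : Finset V}

structure IsWebPair (G : SimpleGraph V) (s₁ s₂ : V) (a : ℕ → ℕ) (A B : ℕ → Finset V) (t : ℕ) :
    Prop where
  left : IsWeb G s₁ A t
  right : IsWeb G s₂ B t
  card_left : ∀ i ≤ t, #(A i) = a i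
  card_right : ∀ i ≤ t, #(B i) = a i
  disjoint : Disjoint ((range (t + 1)).biUnion A) ((range (t + 1)).biUnion B)

variable {m d : ℕ} {s₁ s₂ : V} {a : ℕ → ℕ}

theorem IsWebPair.exists_succ (hbip : IsBipartiteIn G V1 V2) (hexp : IsBipExpander G V1 V2 m d)
    (hs₁ : s₁ ∈ V1) (hs₂ : s₂ ∈ V2) {A B : ℕ → Finset V} {t : ℕ}
    (hW : IsWebPair G s₁ s₂ a A B t) (hpos : 0 < a t) (ham : a t ≤ m)
    (hgrow : a (t + 1) + 2 * ∑ j ∈ range (t + 1), a j ≤ d * a t) :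
    ∃ A' B', IsWebPair G s₁ s₂ a A' B' (t + 1) := by
  set Z := (range (t + 1)).biUnion A ∪ (range (t + 1)).biUnion B
  have hZ : #Z ≤ 2 * ∑ j ∈ range (t + 1), a j := by
    have hA := card_biUnion_range_le hW.card_left
    have hB := card_biUnion_range_le hW.card_right
    have : #Z ≤ _ + _ := card_union_le _ _
    omega
  have hnext : ∀ {s C}, IsWeb G s C t → #(C t) = a t →
      ∃ N ⊆ extNbhd G (C t) \ Z, #N = a (t + 1) := fun {s C} hC hCt ↦ by
    have hexpand := hexp.le_card_extNbhd (hC.subset_or_subset hbip le_rfl)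
      (card_pos.1 (by omega)) (by omega)
    have := le_card_sdiff Z (extNbhd G (C t))
    exact exists_subset_card_eq (by rw [hCt] at hexpand; omega)
  obtain ⟨NA, hNA, hNAcard⟩ := hnext hW.left (hW.card_left t le_rfl)
  obtain ⟨NB, hNB, hNBcard⟩ := hnext hW.right (hW.card_right t le_rfl)
  have hadj : ∀ {C : ℕ → Finset V} {N}, N ⊆ extNbhd G (C t) \ Z →
      ∀ v ∈ N, ∃ u ∈ C t, G.Adj u v := fun hN v hv ↦ by
    have := (mem_sdiff.1 (hN hv)).1
    simp only [extNbhd, mem_filter] at this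
    exact this.2.2
  have hcard : ∀ {C : ℕ → Finset V} {N}, (∀ i ≤ t, #(C i) = a i) → #N = a (t + 1) →
      ∀ i ≤ t + 1, #(Function.update C (t + 1) N i) = a i := fun hC hN i hi ↦ by
    rcases hi.lt_or_eq with hi | rfl
    · rw [Function.update_of_ne (by omega)]; exact hC i (by omega)
    · simpa using hN
  have hNAZ : Disjoint NA Z := sdiff_disjoint.mono_left hNA
  have hNBZ : Disjoint NB Z := sdiff_disjoint.mono_left hNB
  have hA' := hW.left.update (hadj hNA) (hNAZ.mono_right subset_union_left)
  have hB' := hW.right.update (hadj hNB) (hNBZ.mono_right subset_union_right)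
  have hNAB : Disjoint NA NB := by
    simpa using hA'.disjoint_level hbip hB' hs₁ hs₂ le_rfl
  refine ⟨_, _, hA', hB', hcard hW.card_left hNAcard, hcard hW.card_right hNBcard, ?_⟩
  rw [biUnion_range_update, biUnion_range_update, disjoint_union_left, disjoint_union_right,
    disjoint_union_right]
  exact ⟨⟨hNAB, hNAZ.mono_right subset_union_right⟩, hNBZ.symm.mono_left subset_union_left,
    hW.disjoint⟩

theorem exists_isWebPair (hbip : IsBipartiteIn G V1 V2) (hexp : IsBipExpander G V1 V2 m d)
    (hs₁ : s₁ ∈ V1) (hs₂ : s₂ ∈ V2) (ha : a 0 = 1) {t : ℕ} (hpos : ∀ k < t, 0 < a k)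
    (ham : ∀ k < t, a k ≤ m)
    (hgrow : ∀ k < t, a (k + 1) + 2 * ∑ j ∈ range (k + 1), a j ≤ d * a k) :
    ∃ A B, IsWebPair G s₁ s₂ a A B t := by
  induction t with
  | zero =>
    have hs : s₁ ≠ s₂ := fun h ↦ hbip.mem_right_iff.1 (h ▸ hs₂) hs₁
    refine ⟨fun _ ↦ {s₁}, fun _ ↦ {s₂}, ⟨rfl, by simp, by simp⟩, ⟨rfl, by simp, by simp⟩,
      ?_, ?_, by simpa using hs⟩ <;> simp [ha]
  | succ t ih =>
    obtain ⟨A, B, hW⟩ := ih (fun k hk ↦ hpos k (by omega)) (fun k hk ↦ ham k (by omega))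
      (fun k hk ↦ hgrow k (by omega))
    exact hW.exists_succ hbip hexp hs₁ hs₂ (hpos t (by omega)) (ham t (by omega))
      (hgrow t (by omega))

end WebPairs

section DepthFirstSearch

variable {V : Type*} {G : SimpleGraph V} {R F U : Finset V}

/-- A state of depth-first search inside `R`: `F` is finished, `U` unvisited, and the stack `S`
is a path whose top is `a`. -/
structure IsDFSState (G : SimpleGraph V) (R F U : Finset V) {a r : V} (S : G.Walk a r) :
    Prop where
  isPath : S.IsPath
  union_eq : F ∪ U ∪ S.support.toFinset = R
  disjoint : Disjoint U S.support.toFinset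
  not_adj : ∀ x ∈ F, ∀ y ∈ U, ¬G.Adj x y

namespace IsDFSState

variable {a r u : V}

theorem not_adj_insert (h : ∀ x ∈ F, ∀ y ∈ U, ¬G.Adj x y) (ha : ∀ y ∈ U, ¬G.Adj y a) :
    ∀ x ∈ insert a F, ∀ y ∈ U, ¬G.Adj x y := by
  intro x hx y hy hxy
  rcases mem_insert.1 hx with rfl | hx
  exacts [ha y hy hxy.symm, h x hx y hy hxy]

theorem push {S : G.Walk a r} (h : IsDFSState G R F U S) (hu : u ∈ U) (hua : G.Adj u a) :
    IsDFSState G R F (U.erase u) (.cons hua S) where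
  isPath := h.isPath.cons fun hS ↦ disjoint_left.1 h.disjoint hu (List.mem_toFinset.2 hS)
  union_eq := by
    rw [← h.union_eq, Walk.support_cons, List.toFinset_cons]
    ext v
    by_cases hv : v = u <;> simp [hv, hu]
  disjoint := by
    rw [Walk.support_cons, List.toFinset_cons, disjoint_insert_right]
    exact ⟨notMem_erase u U, h.disjoint.mono_left (erase_subset u U)⟩
  not_adj x hx y hy := h.not_adj x hx y (mem_of_mem_erase hy)

theorem pop {S : G.Walk u r} {hau : G.Adj a u} (h : IsDFSState G R F U (.cons hau S))
    (ha : ∀ y ∈ U, ¬G.Adj y a) : IsDFSState G R (insert a F) U S where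
  isPath := h.isPath.of_cons
  union_eq := by
    rw [← h.union_eq, Walk.support_cons, List.toFinset_cons]
    ext v
    simp only [mem_union, mem_insert]
    tauto
  disjoint := h.disjoint.mono_right (by simp [Walk.support_cons])
  not_adj := not_adj_insert h.not_adj ha

theorem restart (h : IsDFSState G R F U (.nil : G.Walk a a)) (ha : ∀ y ∈ U, ¬G.Adj y a)
    (hu : u ∈ U) : IsDFSState G R (insert a F) (U.erase u) (.nil : G.Walk u u) where
  isPath := .nil
  union_eq := by
    rw [← h.union_eq]
    ext v
    by_cases hv : v = u <;> simp [hv, hu]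
  disjoint := by simp
  not_adj x hx y hy := not_adj_insert h.not_adj ha x hx y (mem_of_mem_erase hy)

theorem exists_threshold {P : Finset V → Prop} (hP : ∀ U, P U → U.Nonempty) {a r : V}
    {S : G.Walk a r} (h : IsDFSState G R F U S) (hPU : P U) :
    ∃ (F U U' : Finset V) (a r : V) (S : G.Walk a r), IsDFSState G R F U S ∧ ¬P U ∧ P U' ∧
      ∀ x ∈ F, ∀ y ∈ U', ¬G.Adj x y := by
  induction hμ : 2 * #U + S.length using Nat.strong_induction_on generalizing F U a r S with
  | _ μ ih =>
    by_cases hpush : ∃ u ∈ U, G.Adj u a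
    · obtain ⟨u, hu, hua⟩ := hpush
      have := card_erase_lt_of_mem hu
      by_cases hPu : P (U.erase u)
      · exact ih _ (by simp only [Walk.length_cons] at hμ ⊢; omega) (h.push hu hua) hPu rfl
      · exact ⟨F, U.erase u, U, u, r, _, h.push hu hua, hPu, hPU, h.not_adj⟩
    · push Not at hpush
      cases S with
      | nil =>
        obtain ⟨u, hu⟩ := hP U hPU
        have := card_erase_lt_of_mem hu
        by_cases hPu : P (U.erase u)
        · exact ih _ (by simp only [Walk.length_nil] at hμ ⊢; omega) (h.restart hpush hu) hPu rfl
        · exact ⟨_, U.erase u, U, u, u, .nil, h.restart hpush hu, hPu, hPU,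
            not_adj_insert h.not_adj hpush⟩
      | cons hau S =>
        exact ih _ (by simp only [Walk.length_cons] at hμ; omega) (h.pop hpush) hPU rfl

theorem card_inter_le {S : G.Walk a r} (h : IsDFSState G R F U S) (s : Finset V) :
    #(R ∩ s) ≤ #(F ∩ s) + #(U ∩ s) + #(S.support.toFinset ∩ s) := by
  rw [← h.union_eq, union_inter_distrib_right, union_inter_distrib_right]
  exact (card_union_le _ _).trans (Nat.add_le_add_right (card_union_le _ _) _)

end IsDFSState

end DepthFirstSearch

section LongPath

variable {V : Type*} [Fintype V] {G : SimpleGraph V} {V1 V2 : Finset V} {m : ℕ}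

theorem exists_long_path (hbip : IsBipartiteIn G V1 V2) (hj : IsBipJoined G V1 V2 m)
    {R : Finset V} {N : ℕ} (hN1 : N ≤ #(R ∩ V1)) (hN2 : N ≤ #(R ∩ V2)) (hmN : m ≤ N) :
    ∃ (x y : V) (Q : G.Walk x y), Q.IsPath ∧ (∀ v ∈ Q.support, v ∈ R) ∧
      2 * N ≤ Q.length + 4 * m := by
  have hm := hj.one_le
  obtain ⟨u₀, hu₀⟩ := card_pos.1 (by omega : 0 < #(R ∩ V1))
  rw [mem_inter] at hu₀
  let P : Finset V → Prop := fun U ↦ m ≤ #(U ∩ V1) ∨ m ≤ #(U ∩ V2)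
  have hP : ∀ U, P U → U.Nonempty := fun U hU ↦ by
    rcases hU with hU | hU
    · exact (card_pos.1 (by omega : 0 < #(U ∩ V1))).mono inter_subset_left
    · exact (card_pos.1 (by omega : 0 < #(U ∩ V2))).mono inter_subset_left
  have h₀ : IsDFSState G R ∅ (R.erase u₀) (.nil : G.Walk u₀ u₀) :=
    ⟨.nil, by simp [insert_erase hu₀.1], by simp, by simp⟩
  have hP₀ : P (R.erase u₀) := .inr <| by
    rw [erase_inter, erase_eq_of_notMem fun h ↦ hbip.mem_right_iff.1 (mem_inter.1 h).2 hu₀.2]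
    omega
  obtain ⟨F, U, U', a, r, S, hS, hU, hU', hFU'⟩ := h₀.exists_threshold hP hP₀
  refine ⟨a, r, S, hS.isPath, fun v hv ↦ ?_, ?_⟩
  · exact hS.union_eq ▸ mem_union_right _ (List.mem_toFinset.2 hv)
  -- Now `U` and one side of `F` have fewer than `m` vertices each, so that side of `R` lies
  -- mostly on the stack, which alternates between the sides.
  simp only [P, not_or, not_le] at hU
  have hF := hj.card_inter_lt_or_of_forall_not_adj hFU' hU'
  have h1 := hS.card_inter_le V1
  have h2 := hS.card_inter_le V2
  have c1 := S.two_mul_card_support_inter_le hbip.isIndepSet_left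
  have c2 := S.two_mul_card_support_inter_le hbip.isIndepSet_right
  split_ifs at c1 c2 <;> omega

end LongPath

theorem exists_lt_notMem_notMem {α : Type*} {f g : ℕ → α} {K : ℕ} (hf : Set.InjOn f (Set.Iio K))
    (hg : Set.InjOn g (Set.Iio K)) {B C : Finset α} (hK : #B + #C < K) :
    ∃ j < K, f j ∉ B ∧ g j ∉ C := by
  have hB : #((range K).filter fun j ↦ f j ∈ B) ≤ #B :=
    card_le_card_of_injOn f (fun j hj ↦ (mem_filter.1 hj).2)
      (hf.mono fun j hj ↦ mem_range.1 (mem_filter.1 hj).1)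
  have hC : #((range K).filter fun j ↦ g j ∈ C) ≤ #C :=
    card_le_card_of_injOn g (fun j hj ↦ (mem_filter.1 hj).2)
      (hg.mono fun j hj ↦ mem_range.1 (mem_filter.1 hj).1)
  by_contra! hall
  have hcover : range K ⊆ (range K).filter (fun j ↦ f j ∈ B) ∪ (range K).filter fun j ↦ g j ∈ C :=
    fun j hj ↦ by
      by_cases hfj : f j ∈ B
      · simp [hfj, hj]
      · simp [hall j (mem_range.1 hj) hfj, hj]
  have := (card_le_card hcover).trans (card_union_le _ _)
  rw [card_range] at this
  omega

section Connecting

variable {V : Type*} [Fintype V] {G : SimpleGraph V} {V1 V2 : Finset V} {m : ℕ}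

theorem exists_adj_getVert_adj_getVert (hbip : IsBipartiteIn G V1 V2) (hj : IsBipJoined G V1 V2 m)
    {X Y : Finset V} (hX : X ⊆ V1) (hY : Y ⊆ V1) (hXm : m ≤ #X) (hYm : m ≤ #Y) {u v : V}
    {Q : G.Walk u v} (hQ : Q.IsPath) {D : ℕ} (hD : Even D) (hlen : D + 4 * m ≤ Q.length + 3) :
    ∃ i, i + D ≤ Q.length ∧ (∃ x ∈ X, G.Adj x (Q.getVert i)) ∧
      ∃ y ∈ Y, G.Adj (Q.getVert (i + D)) y := by
  have hm := hj.one_le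
  -- the positions `i₀ + 2 * j` are exactly those where `Q` visits `V2`
  let i₀ := if u ∈ V1 then 1 else 0
  have hpos : ∀ j < 2 * m - 1, i₀ + 2 * j + D ≤ Q.length := fun j hj ↦ by
    simp only [i₀]; split_ifs <;> omega
  have hV2 : ∀ j e, Even e → i₀ + 2 * j + e ≤ Q.length → Q.getVert (i₀ + 2 * j + e) ∈ V2 :=
    fun j e he hle ↦ by
      have := hbip.even_iff_getVert Q hle
      rw [hbip.mem_right_iff]
      simp only [i₀] at this ⊢
      split_ifs at this ⊢ <;> simp_all [Nat.even_add, parity_simps]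
  have hinj : ∀ e ≤ D, Set.InjOn (fun j ↦ Q.getVert (i₀ + 2 * j + e)) (Set.Iio (2 * m - 1)) := by
    intro e he j₁ hj₁ j₂ hj₂ h
    have := hpos j₁ hj₁
    have := hpos j₂ hj₂
    have := hQ.getVert_injOn (by simp only [Set.mem_ofPred_eq]; omega)
      (by simp only [Set.mem_ofPred_eq]; omega) h
    omega
  have hbad : ∀ {Z}, Z ⊆ V1 → m ≤ #Z → #(V2.filter fun w ↦ ∀ z ∈ Z, ¬G.Adj z w) < m :=
    fun hZ hZm ↦ hj.card_lt_of_forall_not_adj hZ (filter_subset _ _) hZm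
      fun z hz w hw ↦ (mem_filter.1 hw).2 z hz
  have hX' := hbad hX hXm
  have hY' := hbad hY hYm
  obtain ⟨j, hj, hjX, hjY⟩ := exists_lt_notMem_notMem (hinj 0 (Nat.zero_le D)) (hinj D le_rfl)
    (B := V2.filter fun w ↦ ∀ z ∈ X, ¬G.Adj z w) (C := V2.filter fun w ↦ ∀ z ∈ Y, ¬G.Adj z w)
    (by omega)
  refine ⟨i₀ + 2 * j, hpos j hj, ?_, ?_⟩
  · by_contra! h
    exact hjX (mem_filter.2 ⟨hV2 j 0 ⟨0, rfl⟩ (by have := hpos j hj; omega), h⟩)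
  · by_contra! h
    exact hjY (mem_filter.2 ⟨hV2 j D hD (hpos j hj), fun y hy hadj ↦ h y hy hadj.symm⟩)

end Connecting

theorem min_two_pow_growth {m k : ℕ} (hk : 2 ^ k ≤ 2 * m) :
    min m (2 ^ (k + 1)) + 2 * ∑ j ∈ range (k + 1), min m (2 ^ j) ≤ 7 * min m (2 ^ k) := by
  have hgeom : ∑ j ∈ range k, min m (2 ^ j) < 2 ^ k :=
    (sum_le_sum fun j _ ↦ min_le_right _ _).trans_lt
      (Nat.geomSum_lt le_rfl fun j hj ↦ mem_range.1 hj)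
  rw [sum_range_succ, pow_succ]
  omega

theorem sum_range_min_two_pow_le {m p : ℕ} (hp : 2 ^ p ≤ m) :
    ∑ j ∈ range (p + 3), min m (2 ^ j) ≤ 4 * m := by
  have hgeom : ∑ j ∈ range (p + 1), min m (2 ^ j) < 2 ^ (p + 1) :=
    (sum_le_sum fun j _ ↦ min_le_right _ _).trans_lt
      (Nat.geomSum_lt le_rfl fun j hj ↦ mem_range.1 hj)
  rw [sum_range_succ, sum_range_succ]
  rw [pow_succ] at hgeom
  have := min_le_left m (2 ^ (p + 1))
  have := min_le_left m (2 ^ (p + 2))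
  omega

section Linking

variable {V : Type*} [Fintype V] {G : SimpleGraph V} {V1 V2 : Finset V} {m d : ℕ}

theorem exists_hasPathsWithin (hbip : IsBipartiteIn G V1 V2) (hexp : IsBipExpander G V1 V2 m d)
    (hd : 7 ≤ d) (hm : 1 ≤ m) {s₁ s₂ : V} (hs₁ : s₁ ∈ V1) (hs₂ : s₂ ∈ V2) :
    ∃ (t₁ t₂ : ℕ) (W₁ W₂ X Y : Finset V), Odd (t₁ + t₂) ∧ t₁ + t₂ ≤ 2 * m + 3 ∧
      Disjoint W₁ W₂ ∧ #W₁ + #W₂ ≤ 8 * m ∧ X ⊆ V1 ∧ Y ⊆ V1 ∧ #X = m ∧ #Y = m ∧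
      HasPathsWithin G s₁ W₁ X t₁ ∧ HasPathsWithin G s₂ W₂ Y t₂ := by
  obtain ⟨p, hp, hp'⟩ : ∃ p, 2 ^ p ≤ m ∧ m < 2 ^ (p + 1) :=
    ⟨Nat.log 2 m, Nat.pow_log_le_self 2 (by omega), Nat.lt_pow_succ_log_self (by norm_num) m⟩
  have hpm : p < m := Nat.lt_two_pow_self.trans_le hp
  obtain ⟨A, B, hW⟩ := exists_isWebPair (a := fun i ↦ min m (2 ^ i)) (t := p + 2) hbip hexp hs₁
    hs₂ (by simp; omega) (fun k _ ↦ lt_min (by omega) (by positivity)) (fun k _ ↦ min_le_left _ _)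
    fun k hk ↦ (min_two_pow_growth ((Nat.pow_le_pow_right two_pos (by omega : k ≤ p + 1)).trans
      (by rw [pow_succ]; omega))).trans (Nat.mul_le_mul_right _ hd)
  have hcard : ∀ t, p + 1 ≤ t → min m (2 ^ t) = m := fun t ht ↦
    min_eq_left (hp'.le.trans (Nat.pow_le_pow_right two_pos ht))
  have hsum := sum_range_min_two_pow_le hp
  have hWA := (card_biUnion_range_le hW.card_left).trans hsum
  have hWB := (card_biUnion_range_le hW.card_right).trans hsum
  obtain ⟨t₁, ht₁, ht₁', heven⟩ : ∃ t₁, p + 1 ≤ t₁ ∧ t₁ ≤ p + 2 ∧ Even t₁ := by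
    rcases Nat.even_or_odd (p + 1) with h | h
    exacts [⟨p + 1, le_rfl, by omega, h⟩, ⟨p + 2, by omega, le_rfl, h.add_one⟩]
  have hodd : ¬Even (2 * p + 3 - t₁) := by
    rw [Nat.not_even_iff_odd, Nat.odd_sub (by omega)]
    simpa [parity_simps] using heven
  refine ⟨t₁, 2 * p + 3 - t₁, _, _, A t₁, B (2 * p + 3 - t₁), ⟨p + 1, by omega⟩, by omega,
    hW.disjoint, by omega, fun v hv ↦ ?_, fun v hv ↦ ?_, ?_, ?_,
    hW.left.hasPathsWithin ht₁', hW.right.hasPathsWithin (by omega)⟩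
  · exact ((hW.left.even_iff hbip ht₁' hv).1 heven).1 hs₁
  · have := hW.right.even_iff hbip (by omega) hv
    have := hbip.mem_right_iff.1 hs₂
    tauto
  · rw [hW.card_left t₁ ht₁', hcard t₁ ht₁]
  · rw [hW.card_right _ (by omega), hcard _ (by omega)]

end Linking

theorem exists_path_through {V : Type*} [Fintype V] {G : SimpleGraph V} {V1 V2 : Finset V} {m : ℕ}
    (hbip : IsBipartiteIn G V1 V2) (hj : IsBipJoined G V1 V2 m) {s₁ s₂ : V}
    {W₁ W₂ X Y : Finset V} {t₁ t₂ : ℕ} (hW : Disjoint W₁ W₂) (hX : X ⊆ V1) (hY : Y ⊆ V1)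
    (hXm : m ≤ #X) (hYm : m ≤ #Y) (h₁ : HasPathsWithin G s₁ W₁ X t₁)
    (h₂ : HasPathsWithin G s₂ W₂ Y t₂) {u v : V} {Q : G.Walk u v} (hQ : Q.IsPath)
    (hQW : ∀ w ∈ Q.support, w ∉ W₁ ∧ w ∉ W₂) {D : ℕ} (hD : Even D)
    (hlen : D + 4 * m ≤ Q.length + 3) :
    ∃ w : G.Walk s₁ s₂, w.IsPath ∧ w.length = t₁ + D + t₂ + 2 := by
  obtain ⟨i, hi, ⟨x, hx, hxQ⟩, y, hy, hQy⟩ :=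
    exists_adj_getVert_adj_getVert hbip hj hX hY hXm hYm hQ hD hlen
  obtain ⟨q, hq, hqlen, hqQ⟩ := hQ.exists_subpath hi
  obtain ⟨w₁, hw₁, hw₁len, hw₁W⟩ := h₁ x hx
  obtain ⟨w₂, hw₂, hw₂len, hw₂W⟩ := h₂ y hy
  have hqw₂ : q.support.Disjoint w₂.reverse.support := fun a ha hb ↦
    (hQW a (hqQ a ha)).2 (hw₂W a (by simpa using hb))
  refine ⟨w₁.append (.cons hxQ (q.append (.cons hQy w₂.reverse))),
    hw₁.append_cons (hq.append_cons hw₂.reverse hQy hqw₂) hxQ fun a ha hb ↦ ?_, ?_⟩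
  · rw [Walk.support_append, Walk.support_cons, List.tail_cons, List.mem_append] at hb
    rcases hb with hb | hb
    · exact (hQW a (hqQ a hb)).1 (hw₁W a ha)
    · exact disjoint_left.1 hW (hw₁W a ha) (hw₂W a (by simpa using hb))
  · simp only [Walk.length_append, Walk.length_cons, Walk.length_reverse, hw₁len, hqlen, hw₂len]
    omega

/-- Connecting path. Let `n ≥ 6dm`, `d ≥ 7`, `n` odd, and let `G` be a
bipartite graph with parts `V₁, V₂` of size at least `3n/2` each which is an
`(m,d)`-bipartite-expander and `m`-bipartite-joined. Then any `s₁ ∈ V₁` and `s₂ ∈ V₂` are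
joined by a path of length `n - 2`. -/
theorem connecting_path {V : Type*} [Fintype V] (G : SimpleGraph V) (V1 V2 : Finset V)
    (n m d : ℕ) (hn : 6 * d * m ≤ n) (hd : 7 ≤ d) (hodd : Odd n)
    (hbip : IsBipartiteIn G V1 V2)
    (hV1 : 3 * (n : ℝ) / 2 ≤ V1.card) (hV2 : 3 * (n : ℝ) / 2 ≤ V2.card)
    (hexp : IsBipExpander G V1 V2 (m : ℝ) (d : ℝ)) (hj : IsBipJoined G V1 V2 m) :
    ∀ s₁ ∈ V1, ∀ s₂ ∈ V2, ∃ w : G.Walk s₁ s₂, w.IsPath ∧ w.length = n - 2 := by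
  intro s₁ hs₁ s₂ hs₂
  have hm := hj.one_le
  have h42 : 42 * m ≤ n := le_trans (by nlinarith) hn
  have hV1' : 3 * n ≤ 2 * #V1 := by exact_mod_cast (by linarith : (3 * n : ℝ) ≤ 2 * #V1)
  have hV2' : 3 * n ≤ 2 * #V2 := by exact_mod_cast (by linarith : (3 * n : ℝ) ≤ 2 * #V2)
  obtain ⟨t₁, t₂, W₁, W₂, X, Y, ht, ht', hW, hWcard, hX, hY, hXm, hYm, h₁, h₂⟩ :=
    exists_hasPathsWithin hbip hexp hd hm hs₁ hs₂
  set R := univ \ (W₁ ∪ W₂)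
  have hR : ∀ s : Finset V, #s ≤ #(R ∩ s) + 8 * m := fun s ↦ by
    have : s ⊆ R ∩ s ∪ (W₁ ∪ W₂) := fun v hv ↦ by by_cases h : v ∈ W₁ ∪ W₂ <;> simp_all [R]
    have := (card_le_card this).trans (card_union_le _ _)
    have := card_union_le W₁ W₂
    omega
  have hR1 := hR V1
  have hR2 := hR V2
  obtain ⟨u, v, Q, hQ, hQR, hQlen⟩ := exists_long_path hbip hj
    (min_le_left #(R ∩ V1) #(R ∩ V2)) (min_le_right _ _) (by omega)
  obtain ⟨w, hw, hwlen⟩ := exists_path_through hbip hj hW hX hY hXm.ge hYm.ge h₁ h₂ hQ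
    (fun w hw ↦ by simpa [R, not_or] using hQR w hw) (D := n - 4 - (t₁ + t₂))
    (by obtain ⟨k, hk⟩ := hodd; obtain ⟨l, hl⟩ := ht; exact ⟨k - l - 2, by omega⟩) (by omega)
  exact ⟨w, hw, by omega⟩
end
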